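/- arXiv:1905.13303 — 6 statements merged into one kernel-verified Lean document; each statement's English description precedes it below -/
import Mathlib

section
/- Separation lemma (Lemma 6.8): Let k be a field of characteristic 0, g ≥ 1, let Y ∈ (M_s(k))^g be a semisimple point and let Z ∈ (M_s(k))^g be a tuple that does not belong to [M_s(k),Y]. Then there exists f ∈ k⟨x_1,…,x_g⟩ such that f(Y) = 0 while f evaluated at the tuple of 2s×2s block matrices (( Y_j , Z_j ; 0 , Y_j ))_{j=1}^g is nonzero. -/
namespace NCPaper

variable {k : Type*} [Field k]

/-- Square matrices of size `s` over `k`. -/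
abbrev Mat (k : Type*) (s : ℕ) := Matrix (Fin s) (Fin s) k

/-- `g`-tuples of square matrices of size `s` over `k`, i.e. points of the nc space. -/
abbrev Tup (k : Type*) (s g : ℕ) := Fin g → Mat k s

variable {s g : ℕ}

/-- Componentwise left multiplication `S·Z = (S Z₁, …, S Z_g)`. -/
def lmul (S : Mat k s) (Z : Tup k s g) : Tup k s g := fun j => S * Z j

/-- Componentwise right multiplication `Z·S = (Z₁ S, …, Z_g S)`. -/
def rmul (Z : Tup k s g) (S : Mat k s) : Tup k s g := fun j => Z j * S

/-- The commutator tuple `[S,Y] = ([S,Y₁], …, [S,Y_g])`. -/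
def brkt (S : Mat k s) (Y : Tup k s g) : Tup k s g := fun j => S * Y j - Y j * S

/-- A point `Y` is semisimple if every subspace invariant under all `Y_j` admits a
complementary invariant subspace. -/
def IsSemisimplePt (Y : Tup k s g) : Prop :=
  ∀ W : Submodule k (Fin s → k), (∀ j, ∀ v ∈ W, (Y j).mulVec v ∈ W) →
    ∃ W' : Submodule k (Fin s → k), (∀ j, ∀ v ∈ W', (Y j).mulVec v ∈ W') ∧ IsCompl W W'

/-- `c` belongs to the centralizer `C(Y)` of `Y` in `M_s(k)`. -/
def Centralizes (Y : Tup k s g) (c : Mat k s) : Prop := ∀ j, c * Y j = Y j * c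

/-- The `(ℓ+1) × (ℓ+1)` block upper bidiagonal matrix tuple `B(Y; Z¹, …, Z^ℓ)` with `Y`
on the diagonal blocks and `Zⁱ` on the superdiagonal blocks. -/
def Bmat (Y : Tup k s g) {ℓ : ℕ} (Z : Fin ℓ → Tup k s g) (j : Fin g) :
    Matrix (Fin (ℓ + 1) × Fin s) (Fin (ℓ + 1) × Fin s) k := fun p q =>
  if p.1 = q.1 then Y j p.2 q.2
  else if h : (p.1 : ℕ) + 1 = (q.1 : ℕ) then
    Z ⟨(p.1 : ℕ), by have := q.1.isLt; omega⟩ j p.2 q.2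
  else 0

/-- The `ℓ`-th order nc differential operator of `F` at `Y`: the top-right `s × s` block of
`F(B(Y; Z¹, …, Z^ℓ))`.  For `ℓ = 0` this is `F(Y)`. -/
noncomputable def Delta (Y : Tup k s g) (ℓ : ℕ) (F : FreeAlgebra k (Fin g))
    (Z : Fin ℓ → Tup k s g) : Mat k s := fun a b =>
  (FreeAlgebra.lift k (Bmat Y Z)) F (0, a) (Fin.last ℓ, b)

/-- The linearly admissible condition relating a `(m+1)`-linear map `fc` to an `m`-linear
map `fp`: inserting a commutator `[S,Y]` at any position of the arguments of `fc` is expressed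
through `fp`. -/
def LacStep {m : ℕ} (Y : Tup k s g)
    (fp : MultilinearMap k (fun _ : Fin m => Tup k s g) (Mat k s))
    (fc : MultilinearMap k (fun _ : Fin (m + 1) => Tup k s g) (Mat k s)) : Prop :=
  ∀ (i : Fin (m + 1)) (S : Mat k s) (Z : Fin m → Tup k s g),
    fc (i.insertNth (brkt S Y) Z) =
      (if h : i = 0 then S * fp Z
        else fp (Function.update Z (i.pred h) (rmul (Z (i.pred h)) S)))
      - (if h : i = Fin.last m then fp Z * S
        else fp (Function.update Z (i.castPred h) (lmul S (Z (i.castPred h)))))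

/-- The boundary conditions at level `L`: elements of the centralizer `C(Y)` can be moved
across any of the `L+1` slots (outer left, between consecutive arguments, outer right). -/
def LacBoundary {L : ℕ} (Y : Tup k s g)
    (f : MultilinearMap k (fun _ : Fin L => Tup k s g) (Mat k s)) : Prop :=
  ∀ c : Mat k s, Centralizes Y c → ∀ (i : Fin (L + 1)) (Z : Fin L → Tup k s g),
    (if h : i = 0 then c * f Z
      else f (Function.update Z (i.pred h) (rmul (Z (i.pred h)) c)))
    = (if h : i = Fin.last L then f Z * c
      else f (Function.update Z (i.castPred h) (lmul c (Z (i.castPred h)))))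

/-- The truncated linearly admissible conditions `LAC_L(Y)` for a sequence
`(f_ℓ)_{ℓ=0}^{L}` of multilinear maps (given as an infinite family, of which only the
members of index `≤ L` are constrained). -/
def SatisfiesLACTrunc (L : ℕ) (Y : Tup k s g)
    (f : ∀ ℓ : ℕ, MultilinearMap k (fun _ : Fin ℓ => Tup k s g) (Mat k s)) : Prop :=
  (∀ ℓ : ℕ, ℓ < L → LacStep Y (f ℓ) (f (ℓ + 1))) ∧ LacBoundary Y (f L)

/-- The (full) linearly admissible conditions `LAC(Y)` for an infinite sequence of
multilinear maps. -/
def SatisfiesLAC (Y : Tup k s g)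
    (f : ∀ ℓ : ℕ, MultilinearMap k (fun _ : Fin ℓ => Tup k s g) (Mat k s)) : Prop :=
  ∀ ℓ : ℕ, LacStep Y (f ℓ) (f (ℓ + 1))

/-! If every polynomial vanishing at `Y` also vanished at the block point `B`, the action of
`k⟨x⟩` on `k^{2s}` through `B` would factor through the image of `k⟨x⟩` in `M_s(k)`. That image
is a semisimple algebra, since it acts faithfully and semisimply on the finite-dimensional space
`k^s`; so `k^{2s}` would be a semisimple module. The projection of `k^{2s}` onto its second block
intertwines `B` with `Y`, hence would have an equivariant section `v ↦ (S v, v)`, and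
equivariance of that section says exactly `Z = [S, Y]`. -/

open Matrix

theorem isSemisimpleModule_of_annihilator_le {R A M N : Type*} [CommRing R] [Ring A]
    [Algebra R A] [AddCommGroup M] [Module R M] [Module A M] [IsScalarTower R A M]
    [Module.Finite R M] [IsSemisimpleModule A M] [AddCommGroup N] [Module A N]
    (h : Module.annihilator A M ≤ Module.annihilator A N) : IsSemisimpleModule A N := by
  obtain ⟨n, v, hv⟩ := Module.Finite.exists_fin (R := R) (M := M)
  let θ : A →ₗ[A] Fin n → M := LinearMap.pi fun i => LinearMap.toSpanSingleton A M (v i)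
  -- `A` acts `R`-linearly, so killing the `R`-generators `v i` means killing all of `M`.
  have hθ : LinearMap.ker θ ≤ Module.annihilator A M := by
    intro a ha
    have hav : ∀ i, a • v i = 0 := fun i => congrFun (LinearMap.mem_ker.mp ha) i
    refine Module.mem_annihilator.mpr fun m => ?_
    have hm : m ∈ Submodule.span R (Set.range v) := hv ▸ Submodule.mem_top
    induction hm using Submodule.span_induction with
    | mem x hx => obtain ⟨i, rfl⟩ := hx; exact hav i
    | zero => exact smul_zero a
    | add x y _ _ hx hy => rw [smul_add, hx, hy, add_zero]
    | smul c x _ hx => rw [smul_comm, hx, smul_zero]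
  have : IsSemisimpleModule A (A ⧸ LinearMap.ker θ) :=
    .congr (LinearMap.quotKerEquivRange θ)
  have hker (x : N) : LinearMap.ker θ ≤ LinearMap.ker (LinearMap.toSpanSingleton A N x) :=
    fun a ha => Module.mem_annihilator.mp (h (hθ ha)) x
  refine isSemisimpleModule_of_isSemisimpleModule_submodule'
    (p := fun x => LinearMap.range ((LinearMap.ker θ).liftQ _ (hker x))) (fun _ => .range _) ?_
  refine eq_top_iff.mpr fun x _ => Submodule.mem_iSup_of_mem x ⟨Submodule.Quotient.mk 1, ?_⟩
  simp

section PointModule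

variable {ι n : Type*} [Fintype n] [DecidableEq n]

/-- `kⁿ` as a module over `k⟨x_i⟩` through a tuple of matrices `X`: `x_i` acts by `X i`. -/
def PointModule (_ : ι → Matrix n n k) : Type _ := n → k

variable (X : ι → Matrix n n k)

instance : AddCommGroup (PointModule X) := inferInstanceAs (AddCommGroup (n → k))

instance : Module k (PointModule X) := inferInstanceAs (Module k (n → k))

instance : Module.Finite k (PointModule X) := inferInstanceAs (Module.Finite k (n → k))

noncomputable instance : Module (FreeAlgebra k ι) (PointModule X) :=
  Module.compHom (n → k) (toLinAlgEquiv'.toAlgHom.comp (FreeAlgebra.lift k X)).toRingHom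

theorem PointModule.smul_def (f : FreeAlgebra k ι) (v : PointModule X) :
    f • v = FreeAlgebra.lift k X f *ᵥ v :=
  toLinAlgEquiv'_apply _ _

instance : IsScalarTower k (FreeAlgebra k ι) (PointModule X) where
  smul_assoc c f v := by
    simp only [PointModule.smul_def, map_smul]
    exact smul_mulVec c _ v

theorem PointModule.mem_annihilator {f : FreeAlgebra k ι} :
    f ∈ Module.annihilator (FreeAlgebra k ι) (PointModule X) ↔ FreeAlgebra.lift k X f = 0 := by
  rw [Module.mem_annihilator, ext_iff_mulVec]
  simp only [PointModule.smul_def, zero_mulVec]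
  rfl

theorem lift_mulVec_mem {W : Submodule k (n → k)} (hW : ∀ i, ∀ v ∈ W, X i *ᵥ v ∈ W)
    (f : FreeAlgebra k ι) : ∀ v ∈ W, FreeAlgebra.lift k X f *ᵥ v ∈ W := by
  induction f using FreeAlgebra.induction with
  | grade0 c =>
    intro v hv
    rw [AlgHom.commutes, Algebra.algebraMap_eq_smul_one, smul_mulVec, one_mulVec]
    exact W.smul_mem c hv
  | grade1 i => simpa only [FreeAlgebra.lift_ι_apply] using hW i
  | mul a b ha hb =>
    intro v hv
    rw [map_mul, ← mulVec_mulVec]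
    exact ha _ (hb v hv)
  | add a b ha hb =>
    intro v hv
    rw [map_add, add_mulVec]
    exact W.add_mem (ha v hv) (hb v hv)

theorem lift_mulVec_of_intertwines {m : Type*} [Fintype m] [DecidableEq m]
    {X' : ι → Matrix m m k} {T : (n → k) →ₗ[k] m → k} (hT : ∀ i v, T (X i *ᵥ v) = X' i *ᵥ T v)
    (f : FreeAlgebra k ι) (v : n → k) :
    T (FreeAlgebra.lift k X f *ᵥ v) = FreeAlgebra.lift k X' f *ᵥ T v := by
  induction f using FreeAlgebra.induction generalizing v with
  | grade0 c => simp only [Algebra.algebraMap_eq_smul_one, map_smul, map_one,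
      smul_mulVec, one_mulVec]
  | grade1 i => simp only [FreeAlgebra.lift_ι_apply, hT]
  | mul a b ha hb => simp only [map_mul, ← mulVec_mulVec, ha, hb]
  | add a b ha hb => simp only [map_add, add_mulVec, ha, hb]

noncomputable def PointModule.linearMapOfIntertwines {m : Type*} [Fintype m] [DecidableEq m]
    (X' : ι → Matrix m m k) (T : (n → k) →ₗ[k] m → k) (hT : ∀ i v, T (X i *ᵥ v) = X' i *ᵥ T v) :
    PointModule X →ₗ[FreeAlgebra k ι] PointModule X' where
  toFun := T
  map_add' := T.map_add
  map_smul' f v := lift_mulVec_of_intertwines X hT f v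

end PointModule

theorem IsSemisimplePt.isSemisimpleModule {Y : Tup k s g} (hY : IsSemisimplePt Y) :
    IsSemisimpleModule (FreeAlgebra k (Fin g)) (PointModule Y) where
  exists_isCompl W := by
    obtain ⟨W', hW', hWW'⟩ := hY (W.restrictScalars k) fun j v hv => by
      rw [← FreeAlgebra.lift_ι_apply (R := k) Y j]
      exact W.smul_mem (.ι k j) hv
    let W'' : Submodule (FreeAlgebra k (Fin g)) (PointModule Y) :=
      { W' with smul_mem' := fun f v hv => lift_mulVec_mem Y hW' f v hv }
    exact ⟨W'', (Submodule.isCompl_restrictScalars_iff k).mp hWW'⟩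

def blockPoint (Y Z : Tup k s g) : Fin g → Matrix (Fin s ⊕ Fin s) (Fin s ⊕ Fin s) k :=
  fun j => fromBlocks (Y j) (Z j) 0 (Y j)

theorem exists_eq_brkt_of_isSemisimpleModule {Y Z : Tup k s g}
    [IsSemisimpleModule (FreeAlgebra k (Fin g)) (PointModule (blockPoint Y Z))] :
    ∃ S : Mat k s, Z = brkt S Y := by
  have hπ (j : Fin g) (x : Fin s ⊕ Fin s → k) :
      LinearMap.funLeft k k Sum.inr (blockPoint Y Z j *ᵥ x) =
        Y j *ᵥ LinearMap.funLeft k k Sum.inr x := by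
    ext i
    simp only [LinearMap.funLeft, blockPoint, fromBlocks_mulVec, zero_mulVec, zero_add,
      LinearMap.coe_mk, AddHom.coe_mk, Function.comp_apply, Sum.elim_inr]
  let π := PointModule.linearMapOfIntertwines (blockPoint Y Z) Y _ hπ
  obtain ⟨σ, hσ⟩ := IsSemisimpleModule.lifting_property π (fun v => ⟨Sum.elim 0 v, rfl⟩) .id
  let S : Mat k s := LinearMap.toMatrix' (LinearMap.funLeft k k Sum.inl ∘ₗ σ.restrictScalars k)
  have hσS (v : Fin s → k) : σ v = Sum.elim (S *ᵥ v) v := by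
    funext i
    rcases i with i | i
    · simp only [S, LinearMap.toMatrix'_mulVec]
      rfl
    · exact congrFun (LinearMap.congr_fun hσ v) i
  refine ⟨S, funext fun j => ext_iff_mulVec.mpr fun v => ?_⟩
  have hσY : σ (FreeAlgebra.lift k Y (.ι k j) *ᵥ v) =
      FreeAlgebra.lift k (blockPoint Y Z) (.ι k j) *ᵥ σ v :=
    σ.map_smul (FreeAlgebra.ι k j) v
  rw [FreeAlgebra.lift_ι_apply, FreeAlgebra.lift_ι_apply, hσS, hσS] at hσY
  have h := congrArg (· ∘ Sum.inl) hσY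
  simp only [mulVec_mulVec, Sum.elim_comp_inl, blockPoint, fromBlocks_mulVec,
    Sum.elim_comp_inr, zero_mul, zero_mulVec, zero_add] at h
  rw [brkt, sub_mulVec]
  exact eq_sub_of_add_eq' h.symm

theorem separation_lemma_general {k : Type*} [Field k]
    {g s : ℕ} (Y : Tup k s g) (hY : IsSemisimplePt Y)
    (Z : Tup k s g) (hZ : ¬ ∃ S : Mat k s, Z = brkt S Y) :
    ∃ f : FreeAlgebra k (Fin g),
      (FreeAlgebra.lift k Y) f = 0 ∧
      (FreeAlgebra.lift k (fun j => Matrix.fromBlocks (Y j) (Z j) 0 (Y j))) f ≠ 0 := by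
  by_contra! hsep
  have := hY.isSemisimpleModule
  have : IsSemisimpleModule (FreeAlgebra k (Fin g)) (PointModule (blockPoint Y Z)) :=
    isSemisimpleModule_of_annihilator_le (R := k) fun f hf =>
      (PointModule.mem_annihilator _).mpr (hsep f ((PointModule.mem_annihilator Y).mp hf))
  exact hZ exists_eq_brkt_of_isSemisimpleModule

/-- **Separation lemma** (Lemma 6.8).  If `Y` is a semisimple point and the tuple `Z` is not
a commutator tuple `[S,Y]`, then some nc polynomial `f` vanishes at `Y` but not at the block
upper triangular point `((Y_j, Z_j; 0, Y_j))_j`. -/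
theorem separation_lemma {k : Type*} [Field k] [CharZero k]
    {g s : ℕ} (hg : 1 ≤ g) (Y : Tup k s g) (hY : IsSemisimplePt Y)
    (Z : Tup k s g) (hZ : ¬ ∃ S : Mat k s, Z = brkt S Y) :
    ∃ f : FreeAlgebra k (Fin g),
      (FreeAlgebra.lift k Y) f = 0 ∧
      (FreeAlgebra.lift k (fun j => Matrix.fromBlocks (Y j) (Z j) 0 (Y j))) f ≠ 0 :=
  separation_lemma_general Y hY Z hZ

end NCPaper
end

section
/- Matrix structure of the germ algebra (formal version of part of Theorem C, via Corollary 6.12): Let k be a field of characteristic 0, g ≥ 1, and let Y ∈ (M_s(k))^g be a point with S(Y) = M_s(k). Then the I_0(Y)-adic completion Ô_Y = lim_ℓ k⟨x_1,…,x_g⟩/I_0(Y)^ℓ is isomorphic as a k-algebra to a matrix algebra M_s(A) for some unital k-algebra A. -/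
/-!
Evaluation at `Y` identifies `k⟨x⟩/I_0(Y)` with `M_s(k)`, so the quotient carries a full
system of `s × s` matrix units. Every projection `k⟨x⟩/I_0(Y)^{n+2} → k⟨x⟩/I_0(Y)^{n+1}` is
surjective with square-zero kernel, and full systems of matrix units lift along such maps by a
first-order correction; lifting step by step yields a coherent system `E_ij` in the inverse limit.
A ring with a full system of matrix units `E_ij` is `M_s(A)` for `A` the centralizer of the
`E_ij`, via `M ↦ ∑ M_ij E_ij` with inverse `r ↦ (∑_m E_mi r E_jm)_ij`.
-/

namespace NCPaper

variable {k : Type*} [Field k]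

variable {s g : ℕ}

/-- Evaluation of nc polynomials at the point `Y`. -/
noncomputable def evalY (Y : Tup k s g) : FreeAlgebra k (Fin g) →ₐ[k] Mat k s :=
  FreeAlgebra.lift k Y

/-- The vanishing ideal `I_0(Y)` (the kernel of evaluation at `Y`), as a `k`-subspace of
the free algebra; it is a two-sided ideal, and its powers are spans of products. -/
noncomputable def I0 (Y : Tup k s g) : Submodule k (FreeAlgebra k (Fin g)) :=
  LinearMap.ker (evalY Y).toLinearMap

lemma I0_mul_le (Y : Tup k s g) : I0 Y * I0 Y ≤ I0 Y := by
  rw [Submodule.mul_le]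
  intro x hx y hy
  simp only [I0, LinearMap.mem_ker, AlgHom.toLinearMap_apply] at *
  rw [map_mul, hx, zero_mul]

lemma I0_mul_top_le (Y : Tup k s g) : I0 Y * ⊤ ≤ I0 Y := by
  rw [Submodule.mul_le]
  intro x hx y _
  simp only [I0, LinearMap.mem_ker, AlgHom.toLinearMap_apply] at *
  rw [map_mul, hx, zero_mul]

lemma I0_pow_mul_top_le (Y : Tup k s g) (a : ℕ) (ha : 1 ≤ a) :
    (I0 Y) ^ a * ⊤ ≤ (I0 Y) ^ a := by
  induction a with
  | zero => omega
  | succ n ih =>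
    rcases Nat.eq_or_lt_of_le ha with h1 | h1
    · rw [← h1, pow_one]; exact I0_mul_top_le Y
    · have hn : 1 ≤ n := by omega
      calc (I0 Y) ^ (n + 1) * ⊤ = (I0 Y) ^ n * (I0 Y * ⊤) := by
            rw [pow_succ, mul_assoc]
        _ ≤ (I0 Y) ^ n * I0 Y := mul_le_mul' le_rfl (I0_mul_top_le Y)
        _ = (I0 Y) ^ (n + 1) := (pow_succ _ _).symm

lemma I0_pow_le (Y : Tup k s g) {a b : ℕ} (ha : 1 ≤ a) (hab : a ≤ b) :
    (I0 Y) ^ b ≤ (I0 Y) ^ a := by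
  obtain ⟨c, rfl⟩ := Nat.exists_eq_add_of_le hab
  calc (I0 Y) ^ (a + c) = (I0 Y) ^ a * (I0 Y) ^ c := pow_add _ _ _
    _ ≤ (I0 Y) ^ a * ⊤ := mul_le_mul' le_rfl le_top
    _ ≤ (I0 Y) ^ a := I0_pow_mul_top_le Y a ha

/-- The congruence relation on the free algebra defined by the two-sided ideal `I_0(Y)^ℓ`. -/
def qRel (Y : Tup k s g) (ℓ : ℕ) (x y : FreeAlgebra k (Fin g)) : Prop :=
  x - y ∈ (I0 Y) ^ ℓ

/-- The quotient algebra `k⟨x⟩ / I_0(Y)^{ℓ+1}`. -/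
abbrev Qt (Y : Tup k s g) (ℓ : ℕ) := RingQuot (qRel Y (ℓ + 1))

/-- The canonical projection `k⟨x⟩/I_0(Y)^{m+1} → k⟨x⟩/I_0(Y)^{ℓ+1}` for `ℓ ≤ m`. -/
noncomputable def projQ (Y : Tup k s g) {ℓ m : ℕ} (h : ℓ ≤ m) : Qt Y m →ₐ[k] Qt Y ℓ :=
  RingQuot.liftAlgHom k ⟨RingQuot.mkAlgHom k (qRel Y (ℓ + 1)),
    fun _ _ hxy => RingQuot.mkAlgHom_rel k
      (I0_pow_le Y (Nat.succ_le_succ (Nat.zero_le ℓ)) (Nat.succ_le_succ h) hxy)⟩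

/-- The inverse limit `lim_ℓ k⟨x⟩/I_0(Y)^ℓ` of the quotients along the canonical
projections, realized as the subalgebra of coherent sequences in the product. -/
noncomputable def InvLim (Y : Tup k s g) : Subalgebra k (∀ ℓ : ℕ, Qt Y ℓ) where
  carrier := {x | ∀ (ℓ m : ℕ) (h : ℓ ≤ m), projQ Y h (x m) = x ℓ}
  mul_mem' := by
    intro a b ha hb ℓ m h
    simp only [Pi.mul_apply, map_mul, ha ℓ m h, hb ℓ m h]
  add_mem' := by
    intro a b ha hb ℓ m h
    simp only [Pi.add_apply, map_add, ha ℓ m h, hb ℓ m h]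
  algebraMap_mem' := by
    intro r ℓ m h
    simp only [Pi.algebraMap_apply, AlgHom.commutes]

end NCPaper

structure IsMatrixUnits {R ι : Type*} [Ring R] [Fintype ι] [DecidableEq ι] (E : ι → ι → R) :
    Prop where
  mul_eq : ∀ i j p q, E i j * E p q = if j = p then E i q else 0
  sum_diag : ∑ i, E i i = 1

namespace IsMatrixUnits

variable {R ι : Type*} [Ring R] {E : ι → ι → R}

theorem commute_of_mem_centralizer (K : Type*) [CommSemiring K] [Algebra K R] {a : R}
    (ha : a ∈ Subalgebra.centralizer K (Set.range (Function.uncurry E))) (i j : ι) :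
    Commute (E i j) a :=
  (Subalgebra.mem_centralizer_iff K).mp ha _ ⟨(i, j), rfl⟩

variable [Fintype ι] [DecidableEq ι]

theorem of_map {S : Type*} [Ring S] {f : R →+* S} (hf : Function.Injective f)
    (hE : IsMatrixUnits fun i j => f (E i j)) : IsMatrixUnits E where
  mul_eq i j p q := hf <| by rw [map_mul, hE.mul_eq, apply_ite f, map_zero]
  sum_diag := hf <| by rw [map_sum, hE.sum_diag, map_one]

theorem pi {N : Type*} {B : N → Type*} [∀ n, Ring (B n)] {E : ∀ n, ι → ι → B n}
    (hE : ∀ n, IsMatrixUnits (E n)) : IsMatrixUnits fun i j n => E n i j where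
  mul_eq i j p q := by
    ext n
    simp only [Pi.mul_apply, (hE n).mul_eq]
    split_ifs <;> rfl
  sum_diag := by
    ext n
    simp only [Finset.sum_apply, (hE n).sum_diag, Pi.one_apply]

def entry (E : ι → ι → R) (r : R) (i j : ι) : R := ∑ m, E m i * r * E j m

theorem mul_entry (hE : IsMatrixUnits E) (r : R) (a b i j : ι) :
    E a b * entry E r i j = E a i * r * E j b := by
  simp only [entry, Finset.mul_sum, ← mul_assoc, hE.mul_eq, ite_mul, zero_mul,
    Finset.sum_ite_eq, Finset.mem_univ, if_true]

theorem entry_mul (hE : IsMatrixUnits E) (r : R) (a b i j : ι) :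
    entry E r i j * E a b = E a i * r * E j b := by
  simp only [entry, Finset.sum_mul, mul_assoc, hE.mul_eq, mul_ite, mul_zero,
    Finset.sum_ite_eq', Finset.mem_univ, if_true]

theorem sum_sum_entry_mul (hE : IsMatrixUnits E) (r : R) :
    ∑ i, ∑ j, entry E r i j * E i j = r := by
  simp only [hE.entry_mul, ← Finset.mul_sum, ← Finset.sum_mul, hE.sum_diag, one_mul, mul_one]

theorem entry_sum_sum_mul (hE : IsMatrixUnits E) {a : ι → ι → R}
    (ha : ∀ i j p q, Commute (E i j) (a p q)) (i j : ι) :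
    entry E (∑ p, ∑ q, a p q * E p q) i j = a i j := by
  have hterm : ∀ m p q, E m i * (a p q * E p q) * E j m =
      if q = j then if p = i then a p q * E m m else 0 else 0 := by
    intro m p q
    rw [← mul_assoc, (ha m i p q).eq, mul_assoc, mul_assoc, ← mul_assoc (E m i), hE.mul_eq]
    rcases eq_or_ne p i with rfl | hp
    · rcases eq_or_ne q j with rfl | hq
      · simp [hE.mul_eq]
      · simp [hq, hE.mul_eq]
    · simp [hp, Ne.symm hp]
  simp only [entry, Finset.mul_sum, Finset.sum_mul, hterm, Finset.sum_ite_eq', Finset.mem_univ,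
    if_true]
  rw [← Finset.mul_sum, hE.sum_diag, mul_one]

theorem sum_sum_mul_mul_sum_sum (hE : IsMatrixUnits E) (a b : ι → ι → R)
    (hb : ∀ i j p q, Commute (E i j) (b p q)) :
    (∑ i, ∑ j, a i j * E i j) * (∑ p, ∑ q, b p q * E p q) =
      ∑ i, ∑ q, (∑ j, a i j * b j q) * E i q := by
  have hterm : ∀ i j p q, a i j * E i j * (b p q * E p q) =
      if p = j then a i j * b p q * E i q else 0 := by
    intro i j p q
    rw [mul_assoc, ← mul_assoc (E i j), (hb i j p q).eq, mul_assoc, hE.mul_eq]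
    by_cases hp : p = j
    · simp [hp, mul_assoc]
    · simp [hp, Ne.symm hp]
  calc (∑ i, ∑ j, a i j * E i j) * (∑ p, ∑ q, b p q * E p q)
      = ∑ i, ∑ j, ∑ q, a i j * b j q * E i q := by
        simp_rw [Finset.sum_mul, Finset.mul_sum, hterm]
        refine Finset.sum_congr rfl fun i _ => Finset.sum_congr rfl fun j _ => ?_
        rw [Finset.sum_comm]
        simp only [Finset.sum_ite_eq', Finset.mem_univ, if_true]
    _ = ∑ i, ∑ q, (∑ j, a i j * b j q) * E i q := by
        simp_rw [Finset.sum_mul]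
        exact Finset.sum_congr rfl fun i _ => Finset.sum_comm

noncomputable def matrixAlgEquiv (K : Type*) [CommSemiring K] [Algebra K R]
    (hE : IsMatrixUnits E) :
    Matrix ι ι (Subalgebra.centralizer K (Set.range (Function.uncurry E))) ≃ₐ[K] R where
  toFun M := ∑ i, ∑ j, (M i j : R) * E i j
  invFun r i j := ⟨entry E r i j, by
    rw [Subalgebra.mem_centralizer_iff]
    rintro _ ⟨⟨a, b⟩, rfl⟩
    rw [Function.uncurry_apply_pair, hE.mul_entry, hE.entry_mul]⟩
  left_inv M := by
    ext i j
    exact hE.entry_sum_sum_mul (fun _ _ p q => commute_of_mem_centralizer K (M p q).2 _ _) i j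
  right_inv r := hE.sum_sum_entry_mul r
  map_mul' M N := by
    rw [hE.sum_sum_mul_mul_sum_sum _ _ fun _ _ p q => commute_of_mem_centralizer K (N p q).2 _ _]
    simp [Matrix.mul_apply]
  map_add' M N := by
    simp only [Matrix.add_apply, Subalgebra.coe_add, add_mul, Finset.sum_add_distrib]
  commutes' c := by
    simp only [Matrix.algebraMap_matrix_apply, apply_ite Subtype.val, Subalgebra.coe_algebraMap,
      ZeroMemClass.coe_zero, ite_mul, zero_mul, Finset.sum_ite_eq, Finset.mem_univ, if_true,
      ← Finset.mul_sum, hE.sum_diag, mul_one]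

end IsMatrixUnits

universe v in
theorem IsMatrixUnits.exists_algEquiv_matrix {R : Type v} {ι : Type*} [Ring R] [Fintype ι]
    [DecidableEq ι] (K : Type*) [CommRing K] [Algebra K R] {E : ι → ι → R}
    (hE : IsMatrixUnits E) :
    ∃ (A : Type v) (_ : Ring A) (_ : Algebra K A), Nonempty (R ≃ₐ[K] Matrix ι ι A) :=
  ⟨_, _, _, ⟨(hE.matrixAlgEquiv K).symm⟩⟩

theorem Matrix.isMatrixUnits_single {ι α : Type*} [Fintype ι] [DecidableEq ι] [Ring α] :
    IsMatrixUnits fun i j : ι => Matrix.single i j (1 : α) where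
  mul_eq i j p q := by
    split_ifs with h
    · rw [h, Matrix.single_mul_single_same, one_mul]
    · exact Matrix.single_mul_single_of_ne (h := h) ..
  sum_diag := Matrix.sum_single_one

namespace IsMatrixUnits

section SquareZeroLift

variable {ι B C : Type*} [DecidableEq ι] [Ring B] [Ring C]

def defect (x : ι → ι → B) (i j p q : ι) : B := x i j * x p q - if j = p then x i q else 0

theorem mul_eq_defect_add (x : ι → ι → B) (i j p q : ι) :
    x i j * x p q = defect x i j p q + if j = p then x i q else 0 :=
  (sub_add_cancel _ _).symm

theorem defect_mul (x : ι → ι → B) (z m i j p q : ι) :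
    defect x z m i j * x p q = x z m * defect x i j p q
      + (if j = p then defect x z m i q else 0) - (if m = i then defect x z j p q else 0) := by
  simp only [defect]
  split_ifs <;> noncomm_ring

variable [Fintype ι]

/-- `∑ m, x m z ⊗ x z m` lifts the separability idempotent of the matrix algebra; contracting it
against the defects gives the first-order correction of the lift `x`. -/
def correction (x : ι → ι → B) (z i j : ι) : B := ∑ m, x m z * defect x z m i j

variable {π : B →+* C} (hsq : ∀ x y, π x = 0 → π y = 0 → x * y = 0)
  {e : ι → ι → C} (he : IsMatrixUnits e) {x : ι → ι → B} (hx : ∀ i j, π (x i j) = e i j)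
include he hx

theorem map_defect (i j p q : ι) : π (defect x i j p q) = 0 := by
  simp only [defect, map_sub, map_mul, hx, apply_ite π, map_zero, he.mul_eq, sub_self]

theorem map_correction (z i j : ι) : π (correction x z i j) = 0 := by
  simp only [correction, map_sum, map_mul, map_defect he hx, mul_zero, Finset.sum_const_zero]

include hsq

theorem defect_mul_defect (i j p q i' j' p' q' : ι) :
    defect x i j p q * defect x i' j' p' q' = 0 :=
  hsq _ _ (map_defect he hx _ _ _ _) (map_defect he hx _ _ _ _)

theorem mul_correction (z i j p q : ι) :
    x i j * correction x z p q = x i z * defect x z j p q := by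
  simp only [correction, Finset.mul_sum, ← mul_assoc, mul_eq_defect_add x i j _ z, add_mul,
    defect_mul_defect hsq he hx, zero_add, ite_mul, zero_mul, Finset.sum_ite_eq, Finset.mem_univ,
    if_true]

theorem sum_mul_defect (z i j p q : ι) :
    (∑ m, x m z * x z m) * defect x i j p q = defect x i j p q := by
  have hone : π (∑ m, x m z * x z m - 1) = 0 := by
    simp only [map_sub, map_sum, map_mul, hx, he.mul_eq, if_true, he.sum_diag, map_one, sub_self]
  have := hsq _ _ hone (map_defect he hx i j p q)
  rwa [sub_mul, one_mul, sub_eq_zero] at this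

theorem correction_mul (z i j p q : ι) :
    correction x z i j * x p q = defect x i j p q
      + (if j = p then correction x z i q else 0) - x i z * defect x z j p q := by
  calc correction x z i j * x p q = ∑ m, x m z * (defect x z m i j * x p q) := by
        simp only [correction, Finset.sum_mul, mul_assoc]
    _ = (∑ m, x m z * x z m) * defect x i j p q
          + (if j = p then correction x z i q else 0) - x i z * defect x z j p q := by
        by_cases hjp : j = p <;>
          simp [hjp, defect_mul, mul_add, mul_sub, Finset.sum_add_distrib, Finset.sum_sub_distrib,
            Finset.sum_mul, mul_assoc, correction]
    _ = _ := by rw [sum_mul_defect hsq he hx]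

theorem sub_correction_mul_sub_correction (z i j p q : ι) :
    (x i j - correction x z i j) * (x p q - correction x z p q) =
      if j = p then x i q - correction x z i q else 0 := by
  have hcc : correction x z i j * correction x z p q = 0 :=
    hsq _ _ (map_correction he hx z i j) (map_correction he hx z p q)
  calc (x i j - correction x z i j) * (x p q - correction x z p q)
      = x i j * x p q - x i j * correction x z p q - correction x z i j * x p q
          + correction x z i j * correction x z p q := by noncomm_ring
    _ = _ := by
      rw [mul_eq_defect_add, mul_correction hsq he hx, correction_mul hsq he hx, hcc]
      split_ifs <;> abel

end SquareZeroLift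

variable {ι B C : Type*} [Fintype ι] [DecidableEq ι] [Ring B] [Ring C] {π : B →+* C}
  (hsq : ∀ x y, π x = 0 → π y = 0 → x * y = 0) {e : ι → ι → C} (he : IsMatrixUnits e)
include hsq he

/-- The sum `u` of the diagonal units is idempotent and `1 - u` lies in the square-zero kernel,
so `1 - u = (1 - u) ^ 2 = 0`. -/
theorem of_mul_eq_of_map {f : ι → ι → B}
    (hf : ∀ i j p q, f i j * f p q = if j = p then f i q else 0) (hfe : ∀ i j, π (f i j) = e i j) :
    IsMatrixUnits f := by
  refine ⟨hf, ?_⟩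
  set u := ∑ i, f i i
  have hu : u * u = u := by
    simp only [u, Finset.sum_mul_sum, hf, Finset.sum_ite_eq, Finset.mem_univ, if_true]
  have hπu : π (1 - u) = 0 := by
    simp only [u, map_sub, map_one, map_sum, hfe, he.sum_diag, sub_self]
  have hidem : (1 - u) * (1 - u) = 1 - u := by
    rw [mul_sub, sub_mul, sub_mul, hu, one_mul, one_mul, mul_one, sub_self, sub_zero]
  rw [← sub_eq_zero, ← neg_sub, neg_eq_zero, ← hidem]
  exact hsq _ _ hπu hπu

theorem exists_lift (hπ : Function.Surjective π) :
    ∃ f : ι → ι → B, IsMatrixUnits f ∧ ∀ i j, π (f i j) = e i j := by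
  choose x hx using fun i j => hπ (e i j)
  cases isEmpty_or_nonempty ι
  · exact ⟨x, he.of_mul_eq_of_map hsq (fun i => isEmptyElim i) hx, hx⟩
  obtain ⟨z⟩ := ‹Nonempty ι›
  have hfe : ∀ i j, π (x i j - correction x z i j) = e i j := fun i j => by
    rw [map_sub, hx, map_correction he hx, sub_zero]
  exact ⟨_, he.of_mul_eq_of_map hsq (sub_correction_mul_sub_correction hsq he hx z) hfe, hfe⟩

end IsMatrixUnits

theorem IsMatrixUnits.exists_coherent {ι : Type*} [Fintype ι] [DecidableEq ι]
    {B : ℕ → Type*} [∀ n, Ring (B n)] (π : ∀ n, B (n + 1) →+* B n)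
    (hπ : ∀ n, Function.Surjective (π n)) (hsq : ∀ n x y, π n x = 0 → π n y = 0 → x * y = 0)
    {e : ι → ι → B 0} (he : IsMatrixUnits e) :
    ∃ E : ∀ n, ι → ι → B n,
      (∀ n, IsMatrixUnits (E n)) ∧ ∀ n i j, π n (E (n + 1) i j) = E n i j := by
  choose lift hlift using fun n (E : {E : ι → ι → B n // IsMatrixUnits E}) =>
    E.2.exists_lift (hsq n) (hπ n)
  let seq : ∀ n, {E : ι → ι → B n // IsMatrixUnits E} :=
    fun n => Nat.rec ⟨e, he⟩ (fun n E => ⟨lift n E, (hlift n E).1⟩) n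
  exact ⟨fun n => (seq n).1, fun n => (seq n).2, fun n => (hlift n (seq n)).2⟩

theorem RingQuot.sub_mem_of_mkAlgHom_eq {S A : Type*} [CommSemiring S] [Ring A] [Algebra S A]
    (I : TwoSidedIdeal A) {r : A → A → Prop} (hr : ∀ a b, r a b → a - b ∈ I) {a b : A}
    (h : RingQuot.mkAlgHom S r a = RingQuot.mkAlgHom S r b) : a - b ∈ I := by
  let φ : RingQuot r →+* I.ringCon.Quotient :=
    RingQuot.lift ⟨I.ringCon.mk', fun x y h =>
      show I.ringCon.mk' x = I.ringCon.mk' y from I.ringCon.eq.mpr ((I.rel_iff _ _).mpr (hr _ _ h))⟩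
  have hmk : ∀ x, RingQuot.mkAlgHom S r x = RingQuot.mkRingHom r x := fun x => by
    rw [← RingQuot.mkAlgHom_coe S]; rfl
  have h' := congrArg φ h
  simp only [φ, hmk] at h'
  rw [RingQuot.lift_mkRingHom_apply, RingQuot.lift_mkRingHom_apply] at h'
  exact (I.rel_iff a b).mp (I.ringCon.eq.mp h')

namespace NCPaper

variable {k : Type*} [Field k] {s g : ℕ} (Y : Tup k s g)

theorem top_mul_I0_pow_succ_le (n : ℕ) : ⊤ * I0 Y ^ (n + 1) ≤ I0 Y ^ (n + 1) := by
  have hI0 : ⊤ * I0 Y ≤ I0 Y := by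
    rw [Submodule.mul_le]
    intro a _ b hb
    simp only [I0, LinearMap.mem_ker, AlgHom.toLinearMap_apply, map_mul] at hb ⊢
    rw [hb, mul_zero]
  rw [pow_succ', ← mul_assoc]
  exact mul_le_mul' hI0 le_rfl

theorem mkAlgHom_eq_zero_iff {n : ℕ} {a : FreeAlgebra k (Fin g)} :
    RingQuot.mkAlgHom k (qRel Y (n + 1)) a = 0 ↔ a ∈ I0 Y ^ (n + 1) := by
  let J : TwoSidedIdeal (FreeAlgebra k (Fin g)) :=
    .mk' ((I0 Y ^ (n + 1) : Submodule k _) : Set _) (zero_mem _) add_mem neg_mem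
      (fun hb => top_mul_I0_pow_succ_le Y n (Submodule.mul_mem_mul Submodule.mem_top hb))
      (fun ha =>
        I0_pow_mul_top_le Y (n + 1) n.succ_pos (Submodule.mul_mem_mul ha Submodule.mem_top))
  rw [← map_zero (RingQuot.mkAlgHom k (qRel Y (n + 1)))]
  constructor
  · intro h
    simpa [J] using
      RingQuot.sub_mem_of_mkAlgHom_eq J (fun a b hab => by simpa [J, qRel] using hab) h
  · intro ha
    exact RingQuot.mkAlgHom_rel k (by simpa [qRel] using ha)

theorem projQ_mk {l m : ℕ} (h : l ≤ m) (a : FreeAlgebra k (Fin g)) :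
    projQ Y h (RingQuot.mkAlgHom k (qRel Y (m + 1)) a) = RingQuot.mkAlgHom k (qRel Y (l + 1)) a :=
  RingQuot.liftAlgHom_mkAlgHom_apply _ _ _ _

theorem projQ_self (l : ℕ) (x : Qt Y l) : projQ Y le_rfl x = x := by
  obtain ⟨a, rfl⟩ := RingQuot.mkAlgHom_surjective k _ x
  exact projQ_mk Y _ a

theorem projQ_projQ {l m n : ℕ} (hlm : l ≤ m) (hmn : m ≤ n) (x : Qt Y n) :
    projQ Y hlm (projQ Y hmn x) = projQ Y (hlm.trans hmn) x := by
  obtain ⟨a, rfl⟩ := RingQuot.mkAlgHom_surjective k _ x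
  simp only [projQ_mk]

theorem projQ_surjective {l m : ℕ} (h : l ≤ m) : Function.Surjective (projQ Y h) := by
  intro x
  obtain ⟨a, rfl⟩ := RingQuot.mkAlgHom_surjective k _ x
  exact ⟨_, projQ_mk Y h a⟩

theorem mul_eq_zero_of_projQ_succ_eq_zero {n : ℕ} {x y : Qt Y (n + 1)}
    (hx : projQ Y n.le_succ x = 0) (hy : projQ Y n.le_succ y = 0) : x * y = 0 := by
  obtain ⟨a, rfl⟩ := RingQuot.mkAlgHom_surjective k _ x
  obtain ⟨b, rfl⟩ := RingQuot.mkAlgHom_surjective k _ y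
  rw [projQ_mk, mkAlgHom_eq_zero_iff] at hx hy
  rw [← map_mul, mkAlgHom_eq_zero_iff]
  have hab : a * b ∈ I0 Y ^ (n + 1 + (n + 1)) := pow_add (I0 Y) _ _ ▸ Submodule.mul_mem_mul hx hy
  exact I0_pow_le Y (by omega) (by omega) hab

theorem mem_invLim_of_projQ_succ {x : ∀ n, Qt Y n}
    (hx : ∀ n, projQ Y n.le_succ (x (n + 1)) = x n) : x ∈ InvLim Y := by
  intro l m h
  induction m, h using Nat.le_induction with
  | base => exact projQ_self Y l (x l)
  | succ m hlm ih => rw [← projQ_projQ Y hlm m.le_succ, hx, ih]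

theorem evalY_surjective (hfull : Algebra.adjoin k (Set.range Y) = ⊤) :
    Function.Surjective (evalY Y) := by
  rw [← AlgHom.range_eq_top, evalY, ← Algebra.adjoin_range_eq_range_freeAlgebra_lift, hfull]

noncomputable def evalQtZero : Qt Y 0 →ₐ[k] Mat k s :=
  RingQuot.liftAlgHom k ⟨evalY Y, fun a b hab => by simpa [qRel, I0, sub_eq_zero] using hab⟩

theorem evalQtZero_mk (a : FreeAlgebra k (Fin g)) :
    evalQtZero Y (RingQuot.mkAlgHom k (qRel Y 1) a) = evalY Y a :=
  RingQuot.liftAlgHom_mkAlgHom_apply _ _ _ _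

theorem exists_isMatrixUnits_qt_zero (hfull : Algebra.adjoin k (Set.range Y) = ⊤) :
    ∃ e : Fin s → Fin s → Qt Y 0, IsMatrixUnits e := by
  have hsurj : Function.Surjective (evalQtZero Y) := by
    intro M
    obtain ⟨a, rfl⟩ := evalY_surjective Y hfull M
    exact ⟨_, evalQtZero_mk Y a⟩
  have hker : ∀ x, evalQtZero Y x = 0 → x = 0 := by
    intro x hx
    obtain ⟨a, rfl⟩ := RingQuot.mkAlgHom_surjective k _ x
    rw [evalQtZero_mk] at hx
    exact (mkAlgHom_eq_zero_iff Y).mpr (by simpa [I0] using hx)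
  obtain ⟨e, he, -⟩ := (Matrix.isMatrixUnits_single (ι := Fin s) (α := k)).exists_lift
    (π := (evalQtZero Y).toRingHom) (fun x y hx _ => by rw [hker x hx, zero_mul]) hsurj
  exact ⟨e, he⟩

universe u

theorem germ_algebra_matrix_structure_general {k : Type u} [Field k]
    {g s : ℕ} (Y : Tup k s g)
    (hfull : Algebra.adjoin k (Set.range Y) = ⊤) :
    ∃ (A : Type u) (_ : Ring A) (_ : Algebra k A),
      Nonempty (InvLim Y ≃ₐ[k] Matrix (Fin s) (Fin s) A) := by
  obtain ⟨e, he⟩ := exists_isMatrixUnits_qt_zero Y hfull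
  obtain ⟨E, hE, hcoh⟩ := he.exists_coherent (fun n => projQ Y n.le_succ)
    (fun n => projQ_surjective Y _) (fun n _ _ => mul_eq_zero_of_projQ_succ_eq_zero Y)
  obtain ⟨EE, hEE⟩ : ∃ EE : Fin s → Fin s → InvLim Y, IsMatrixUnits EE :=
    ⟨fun i j => ⟨fun n => E n i j, mem_invLim_of_projQ_succ Y fun n => hcoh n i j⟩,
      IsMatrixUnits.of_map (f := (InvLim Y).val.toRingHom) Subtype.val_injective
        (IsMatrixUnits.pi hE)⟩
  exact hEE.exists_algEquiv_matrix k

/-- **Matrix structure of the germ algebra** (formal version of part of Theorem C, via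
Corollary 6.12).  If the point `Y` generates the full matrix algebra `M_s(k)`, then the
`I_0(Y)`-adic completion of the free algebra is isomorphic to a matrix algebra `M_s(A)`
over some unital `k`-algebra `A`. -/
theorem germ_algebra_matrix_structure {k : Type u} [Field k] [CharZero k]
    {g s : ℕ} (hg : 1 ≤ g) (Y : Tup k s g)
    (hfull : Algebra.adjoin k (Set.range Y) = ⊤) :
    ∃ (A : Type u) (_ : Ring A) (_ : Algebra k A),
      Nonempty (InvLim Y ≃ₐ[k] Matrix (Fin s) (Fin s) A) :=
  germ_algebra_matrix_structure_general Y hfull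

end NCPaper
end

section
/- Density lemma for bimodule homomorphisms (Lemma 6.6): Let k be a field of characteristic 0, let C be a finite-dimensional semisimple k-algebra, and let U, V be finite-dimensional C-bimodules. Let 𝒯 be a k-subspace of Hom_{C-C}(U,V) such that: (1) for every nonzero u ∈ U there exists T ∈ 𝒯 with T(u) ≠ 0; and (2) Φ ∘ T ∈ 𝒯 for every Φ ∈ End_{C-C}(V) and every T ∈ 𝒯. Then 𝒯 = Hom_{C-C}(U,V). -/
/-!
Pick a basis `F₁, …, Fₘ` of `𝒯`. Separation makes `Θ = (F₁, …, Fₘ) : U → Vᵐ` an injective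
bimodule map. In characteristic 0 the trace form `(x, y) ↦ tr (x * y ·)` of `C` is nondegenerate:
every element of its radical has `tr ((x ·)ⁿ) = 0` for all `n ≥ 1`, hence is nilpotent, so the
radical is a nil left ideal, which a semisimple ring does not have. Dual bases for this form give
a separability idempotent of `C`, and likewise of `Cᵐᵒᵖ`; averaging a `k`-linear left inverse of
`Θ` with these idempotents yields a bimodule left inverse `Ψ`. Then every bimodule map
`f : U → V` factors as `f = f ∘ Ψ ∘ Θ = ∑ᵢ (f ∘ Ψ ∘ ιᵢ) ∘ Fᵢ`, where each `f ∘ Ψ ∘ ιᵢ` is a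
bimodule endomorphism of `V`, so `f ∈ 𝒯`.
-/

open Module LinearMap TensorProduct

theorem LinearMap.constantCoeff_charpoly_eq_zero_of_trace_pow_eq_zero {k E : Type*} [Field k]
    [CharZero k] [AddCommGroup E] [Module k E] [FiniteDimensional k E] [Nontrivial E]
    (f : End k E) (h : ∀ n, 0 < n → trace k E (f ^ n) = 0) :
    Polynomial.constantCoeff f.charpoly = 0 := by
  have hCH := congrArg (trace k E) (aeval_self_charpoly f)
  rw [Polynomial.aeval_eq_sum_range, map_sum, map_zero, Finset.sum_eq_single 0
    (fun n _ hn => by rw [map_smul, h n (Nat.pos_of_ne_zero hn), smul_zero]) (by simp),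
    pow_zero, map_smul, trace_one, smul_eq_mul, mul_eq_zero, Nat.cast_eq_zero] at hCH
  simpa [Polynomial.coeff_zero_eq_eval_zero, finrank_pos.ne'] using hCH

theorem LinearMap.isNilpotent_of_trace_pow_eq_zero {k E : Type*} [Field k] [CharZero k]
    [AddCommGroup E] [Module k E] [FiniteDimensional k E]
    (f : End k E) (h : ∀ n, 0 < n → trace k E (f ^ n) = 0) : IsNilpotent f := by
  induction hd : finrank k E using Nat.strong_induction_on generalizing E with
  | _ d ih =>
  rcases subsingleton_or_nontrivial E with hE | hE
  · exact ⟨1, Subsingleton.elim _ _⟩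
  obtain ⟨v, hv, hfv⟩ := (charpoly_constantCoeff_eq_zero_iff f).mp
    (constantCoeff_charpoly_eq_zero_of_trace_pow_eq_zero f h)
  have hrange : finrank k (range f) < d := by
    have := finrank_range_add_finrank_ker f
    have : 0 < finrank k (ker f) :=
      finrank_pos_iff_exists_ne_zero.mpr ⟨⟨v, hfv⟩, Subtype.coe_ne_coe.mp hv⟩
    omega
  have hmaps : ∀ x ∈ range f, f x ∈ range f := fun x _ => mem_range_self f x
  -- the powers `f ^ (n + 1)` have their range inside `range f`, so restricting keeps the traces
  obtain ⟨n, hn⟩ := ih _ hrange (f.restrict hmaps) (fun n hn => by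
    rw [Module.End.pow_restrict, trace_restrict_eq_of_forall_mem _ _ fun x => ?_]
    · exact h n hn
    · obtain ⟨m, rfl⟩ := Nat.exists_eq_add_of_lt hn
      rw [pow_succ', Module.End.mul_apply]
      exact mem_range_self f _) rfl
  refine ⟨n + 1, LinearMap.ext fun x => ?_⟩
  have := congrArg Subtype.val (LinearMap.congr_fun hn ⟨f x, mem_range_self f x⟩)
  rw [Module.End.pow_restrict, restrict_apply] at this
  simpa [pow_succ] using this

theorem IsSemisimpleRing.eq_bot_of_forall_isNilpotent {R : Type*} [Ring R] [IsSemisimpleRing R]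
    (I : Ideal R) (h : ∀ x ∈ I, IsNilpotent x) : I = ⊥ := by
  obtain ⟨e, he, rfl⟩ := IsSemisimpleRing.ideal_eq_span_idempotent I
  rw [he.eq_zero_of_isNilpotent (h e (Ideal.subset_span rfl)),
    Ideal.span_singleton_eq_bot.mpr rfl]

namespace LinearMap.BilinForm

variable {k D ι : Type*} [Field k] [Ring D] [Algebra k D] [Fintype ι] [DecidableEq ι]

theorem repr_apply_eq_apply_dualBasis {B : LinearMap.BilinForm k D} (hB : B.Nondegenerate)
    (b : Basis ι k D) (v : D) (i : ι) : b.repr v i = B (B.dualBasis hB b i) v := by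
  simpa using B.flip.dualBasis_repr_apply hB.flip (B.dualBasis hB b) v i

theorem sum_mul_tmul_dualBasis {B : LinearMap.BilinForm k D} (hB : B.Nondegenerate)
    (hassoc : ∀ x y z, B (x * y) z = B x (y * z)) (b : Basis ι k D) (d : D) :
    ∑ i, (d * b i) ⊗ₜ[k] B.dualBasis hB b i = ∑ i, b i ⊗ₜ[k] (B.dualBasis hB b i * d) := by
  set y := B.dualBasis hB b
  have hb (v : D) : ∑ j, B (y j) v • b j = v := by
    simpa only [repr_apply_eq_apply_dualBasis hB] using b.sum_repr v
  have hy (v : D) : ∑ j, B v (b j) • y j = v := by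
    simpa only [y, dualBasis_repr_apply] using y.sum_repr v
  conv_lhs => enter [2, i]; rw [← hb (d * b i)]
  conv_rhs => enter [2, i]; rw [← hy (y i * d)]
  simp only [sum_tmul, tmul_sum, smul_tmul, tmul_smul]
  rw [Finset.sum_comm]
  simp only [hassoc]

end LinearMap.BilinForm

section RegularTrace

variable (k D : Type*) [Field k] [Ring D] [Algebra k D]

noncomputable def regularTrace : D →ₗ[k] k :=
  trace k D ∘ₗ (Algebra.lmul k D).toLinearMap

noncomputable def regularTraceForm : LinearMap.BilinForm k D :=
  (LinearMap.mul k D).compr₂ (regularTrace k D)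

variable {k D}

theorem regularTrace_apply (x : D) : regularTrace k D x = trace k D (Algebra.lmul k D x) := rfl

@[simp]
theorem regularTraceForm_apply (x y : D) : regularTraceForm k D x y = regularTrace k D (x * y) :=
  rfl

theorem regularTrace_mul_comm (x y : D) : regularTrace k D (x * y) = regularTrace k D (y * x) := by
  simp only [regularTrace_apply, map_mul, LinearMap.trace_mul_comm]

theorem isNilpotent_of_forall_regularTrace_mul_eq_zero [CharZero k] [FiniteDimensional k D]
    {x : D} (hx : ∀ y, regularTrace k D (x * y) = 0) : IsNilpotent x := by
  obtain ⟨n, hn⟩ := LinearMap.isNilpotent_of_trace_pow_eq_zero (Algebra.lmul k D x) fun n hn => by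
    obtain ⟨m, rfl⟩ := Nat.exists_eq_add_of_lt hn
    rw [← map_pow, ← regularTrace_apply, pow_succ']
    exact hx _
  rw [← map_pow] at hn
  exact ⟨n, by simpa using LinearMap.congr_fun hn 1⟩

theorem eq_zero_of_forall_regularTrace_mul_eq_zero [CharZero k] [FiniteDimensional k D]
    [IsSemisimpleRing D] {x : D} (hx : ∀ y, regularTrace k D (x * y) = 0) : x = 0 := by
  have hspan : Ideal.span {x} = ⊥ := IsSemisimpleRing.eq_bot_of_forall_isNilpotent _ fun z hz => by
    obtain ⟨c, rfl⟩ := Ideal.mem_span_singleton'.mp hz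
    refine isNilpotent_of_forall_regularTrace_mul_eq_zero (k := k) fun y => ?_
    rw [mul_assoc, regularTrace_mul_comm, mul_assoc]
    exact hx (y * c)
  exact Ideal.span_singleton_eq_bot.mp hspan

theorem regularTraceForm_nondegenerate [CharZero k] [FiniteDimensional k D] [IsSemisimpleRing D] :
    (regularTraceForm k D).Nondegenerate :=
  ⟨fun _ hx => eq_zero_of_forall_regularTrace_mul_eq_zero hx,
    fun y hy => eq_zero_of_forall_regularTrace_mul_eq_zero (k := k) fun x => by
      rw [regularTrace_mul_comm]; exact hy x⟩

theorem sum_mul_dualBasis_regularTraceForm {ι : Type*} [Fintype ι] [DecidableEq ι]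
    (hB : (regularTraceForm k D).Nondegenerate) (b : Basis ι k D) :
    ∑ i, b i * (regularTraceForm k D).dualBasis hB b i = 1 := by
  set y := (regularTraceForm k D).dualBasis hB b
  refine sub_eq_zero.mp (hB.1 _ fun a => ?_)
  have htrace : regularTrace k D a = ∑ i, regularTrace k D (b i * y i * a) := by
    rw [regularTrace_apply, trace_eq_matrix_trace k b, Matrix.trace]
    refine Finset.sum_congr rfl fun i _ => ?_
    rw [Matrix.diag_apply, toMatrix_apply, LinearMap.BilinForm.repr_apply_eq_apply_dualBasis hB,
      regularTraceForm_apply, Algebra.coe_lmul_eq_mul, mul_apply', ← mul_assoc,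
      regularTrace_mul_comm, mul_assoc]
  rw [regularTraceForm_apply, sub_mul, Finset.sum_mul, map_sub, map_sum, one_mul, htrace, sub_self]

end RegularTrace

section Separability

variable {k D : Type*} [Field k] [Ring D] [Algebra k D]

variable (k) in
/-- `∑ i, X i ⊗ Y i` is a separability idempotent of `D` over `k`. -/
structure IsSeparabilityFamily {ι : Type*} [Fintype ι] (X Y : ι → D) : Prop where
  sum_mul_eq_one : ∑ i, X i * Y i = 1
  sum_mul_tmul_eq : ∀ d, ∑ i, (d * X i) ⊗ₜ[k] Y i = ∑ i, X i ⊗ₜ[k] (Y i * d)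

theorem exists_isSeparabilityFamily [CharZero k] [FiniteDimensional k D] [IsSemisimpleRing D] :
    ∃ X Y : Fin (finrank k D) → D, IsSeparabilityFamily k X Y :=
  let b := Module.finBasis k D
  let hB := regularTraceForm_nondegenerate (k := k) (D := D)
  ⟨b, (regularTraceForm k D).dualBasis hB b, sum_mul_dualBasis_regularTraceForm hB b,
    LinearMap.BilinForm.sum_mul_tmul_dualBasis hB (fun x y z => by simp [mul_assoc]) b⟩

variable {M N : Type*} [AddCommGroup M] [Module k M] [Module D M] [IsScalarTower k D M]
  [AddCommGroup N] [Module k N] [Module D N] [IsScalarTower k D N]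
  {ι : Type*} [Fintype ι] {X Y : ι → D}

variable (X Y) in
noncomputable def sandwichSum (ψ : N →ₗ[k] M) : N →ₗ[k] M :=
  ∑ i, Algebra.lsmul k k M (X i) ∘ₗ ψ ∘ₗ Algebra.lsmul k k N (Y i)

theorem sandwichSum_apply (ψ : N →ₗ[k] M) (x : N) :
    sandwichSum X Y ψ x = ∑ i, X i • ψ (Y i • x) := by
  simp [sandwichSum]

theorem IsSeparabilityFamily.sandwichSum_map_smul (h : IsSeparabilityFamily k X Y)
    (ψ : N →ₗ[k] M) (d : D) (x : N) : sandwichSum X Y ψ (d • x) = d • sandwichSum X Y ψ x := by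
  have key := congrArg (TensorProduct.lift ((Algebra.lsmul k k M).toLinearMap.compl₂
    (ψ ∘ₗ (Algebra.lsmul k k N).toLinearMap.flip x))) (h.sum_mul_tmul_eq d)
  simp only [map_sum, lift.tmul, compl₂_apply, AlgHom.toLinearMap_apply, map_mul, coe_comp,
    Function.comp_apply, flip_apply, Algebra.lsmul_coe, End.mul_apply] at key
  rw [sandwichSum_apply, sandwichSum_apply, Finset.smul_sum]
  exact key.symm

theorem IsSeparabilityFamily.sandwichSum_comp_eq_id (h : IsSeparabilityFamily k X Y)
    {Θ : M →ₗ[k] N} (hΘ : ∀ (d : D) (x : M), Θ (d • x) = d • Θ x) {ψ : N →ₗ[k] M}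
    (hψ : ψ ∘ₗ Θ = LinearMap.id) : sandwichSum X Y ψ ∘ₗ Θ = LinearMap.id := by
  ext x
  simp only [comp_apply, sandwichSum_apply, ← hΘ, ← comp_apply ψ Θ, hψ, id_apply, ← mul_smul,
    ← Finset.sum_smul, h.sum_mul_eq_one, one_smul]

theorem sandwichSum_map_smul_of_map_smul {S : Type*} [Monoid S] [DistribMulAction S M]
    [DistribMulAction S N] [SMulCommClass D S M] [SMulCommClass D S N] {ψ : N →ₗ[k] M}
    (hψ : ∀ (s : S) (x : N), ψ (s • x) = s • ψ x) (s : S) (x : N) :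
    sandwichSum X Y ψ (s • x) = s • sandwichSum X Y ψ x := by
  simp only [sandwichSum_apply, smul_comm _ s, hψ, Finset.smul_sum]

end Separability

theorem injective_pi_basis_of_separating {k U V ι : Type*} [Field k] [AddCommGroup U] [Module k U]
    [AddCommGroup V] [Module k V] [Fintype ι] {T : Submodule k (U →ₗ[k] V)} (b : Basis ι k T)
    (hsep : ∀ u : U, u ≠ 0 → ∃ f ∈ T, f u ≠ 0) :
    Function.Injective (LinearMap.pi fun i => (b i : U →ₗ[k] V)) := by
  refine (injective_iff_map_eq_zero _).mpr fun u hu => by_contra fun hne => ?_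
  obtain ⟨f, hf, hfu⟩ := hsep u hne
  have hfb : f = ∑ i, b.repr ⟨f, hf⟩ i • (b i : U →ₗ[k] V) := by
    simpa only [Submodule.coe_sum, Submodule.coe_smul] using
      congrArg Subtype.val (b.sum_repr ⟨f, hf⟩).symm
  refine hfu ?_
  rw [hfb, LinearMap.sum_apply]
  refine Finset.sum_eq_zero fun i _ => ?_
  rw [LinearMap.smul_apply, show (b i : U →ₗ[k] V) u = 0 by simpa using congrFun hu i, smul_zero]

section Bimodule

variable {k : Type*} [Field k] [CharZero k]
  {C : Type*} [Ring C] [Algebra k C] [FiniteDimensional k C] [IsSemisimpleRing C]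
  {U W : Type*} [AddCommGroup U] [Module k U] [Module C U] [Module Cᵐᵒᵖ U]
  [SMulCommClass C Cᵐᵒᵖ U] [IsScalarTower k C U] [IsScalarTower k Cᵐᵒᵖ U]
  [AddCommGroup W] [Module k W] [Module C W] [Module Cᵐᵒᵖ W]
  [SMulCommClass C Cᵐᵒᵖ W] [IsScalarTower k C W] [IsScalarTower k Cᵐᵒᵖ W]

theorem exists_bimodule_leftInverse_of_injective (Θ : U →ₗ[k] W) (hΘ : Function.Injective Θ)
    (hΘC : ∀ (c : C) (x : U), Θ (c • x) = c • Θ x)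
    (hΘO : ∀ (c : Cᵐᵒᵖ) (x : U), Θ (c • x) = c • Θ x) :
    ∃ Ψ : W →ₗ[k] U, (∀ (c : C) (w : W), Ψ (c • w) = c • Ψ w) ∧
      (∀ (c : Cᵐᵒᵖ) (w : W), Ψ (c • w) = c • Ψ w) ∧ Ψ ∘ₗ Θ = LinearMap.id := by
  obtain ⟨ψ, hψ⟩ := exists_leftInverse_of_injective Θ (ker_eq_bot.mpr hΘ)
  obtain ⟨X, Y, hXY⟩ := exists_isSeparabilityFamily (k := k) (D := C)
  obtain ⟨X', Y', hXY'⟩ := exists_isSeparabilityFamily (k := k) (D := Cᵐᵒᵖ)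
  have := SMulCommClass.symm C Cᵐᵒᵖ U
  have := SMulCommClass.symm C Cᵐᵒᵖ W
  exact ⟨sandwichSum X' Y' (sandwichSum X Y ψ),
    sandwichSum_map_smul_of_map_smul (hXY.sandwichSum_map_smul ψ),
    hXY'.sandwichSum_map_smul _,
    hXY'.sandwichSum_comp_eq_id hΘO (hXY.sandwichSum_comp_eq_id hΘC hψ)⟩

end Bimodule

/-- **Density lemma for bimodule homomorphisms** (Lemma 6.6).  Let `C` be a
finite-dimensional semisimple algebra over a field `k` of characteristic 0, and let `U`, `V`
be finite-dimensional `C`-bimodules (left `C`- and right `C`-module structures, the right one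
recorded as a `Cᵐᵒᵖ`-action, commuting with each other and compatible with the `k`-structure).
If a `k`-subspace `T` of bimodule homomorphisms `U → V` separates the points of `U` and is
stable under postcomposition with bimodule endomorphisms of `V`, then `T` contains every
bimodule homomorphism `U → V`. -/
theorem density_lemma_for_bimodule_homs
    {k : Type*} [Field k] [CharZero k]
    (C : Type*) [Ring C] [Algebra k C] [FiniteDimensional k C] [IsSemisimpleRing C]
    (U : Type*) [AddCommGroup U] [Module k U] [Module C U] [Module Cᵐᵒᵖ U]
    [SMulCommClass C Cᵐᵒᵖ U] [IsScalarTower k C U] [IsScalarTower k Cᵐᵒᵖ U]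
    [FiniteDimensional k U]
    (V : Type*) [AddCommGroup V] [Module k V] [Module C V] [Module Cᵐᵒᵖ V]
    [SMulCommClass C Cᵐᵒᵖ V] [IsScalarTower k C V] [IsScalarTower k Cᵐᵒᵖ V]
    [FiniteDimensional k V]
    (T : Submodule k (U →ₗ[k] V))
    (hT : ∀ f ∈ T, (∀ (c : C) (u : U), f (c • u) = c • f u) ∧
      (∀ (c : Cᵐᵒᵖ) (u : U), f (c • u) = c • f u))
    (hsep : ∀ u : U, u ≠ 0 → ∃ f ∈ T, f u ≠ 0)
    (hstable : ∀ Φ : V →ₗ[k] V, (∀ (c : C) (v : V), Φ (c • v) = c • Φ v) →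
      (∀ (c : Cᵐᵒᵖ) (v : V), Φ (c • v) = c • Φ v) → ∀ f ∈ T, Φ ∘ₗ f ∈ T) :
    ∀ f : U →ₗ[k] V, (∀ (c : C) (u : U), f (c • u) = c • f u) →
      (∀ (c : Cᵐᵒᵖ) (u : U), f (c • u) = c • f u) → f ∈ T := by
  intro f hfC hfO
  let b := Module.finBasis k T
  let F i : U →ₗ[k] V := b i
  obtain ⟨Ψ, hΨC, hΨO, hΨΘ⟩ := exists_bimodule_leftInverse_of_injective (LinearMap.pi F)
    (injective_pi_basis_of_separating b hsep)
    (fun c u => funext fun i => (hT _ (b i).2).1 c u)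
    (fun c u => funext fun i => (hT _ (b i).2).2 c u)
  have hf : f = ∑ i, (f ∘ₗ Ψ ∘ₗ single k (fun _ => V) i) ∘ₗ F i := by
    ext u
    have hΘu := Finset.univ_sum_single (LinearMap.pi F u)
    simp only [LinearMap.sum_apply, comp_apply, ← map_sum, coe_single, pi_apply] at hΘu ⊢
    rw [hΘu, ← comp_apply Ψ, hΨΘ, id_apply]
  rw [hf]
  refine Submodule.sum_mem T fun i _ => hstable _ (fun c v => ?_) (fun c v => ?_) _ (b i).2
  · simp [Pi.single_smul', hΨC, hfC]
  · simp [Pi.single_smul', hΨO, hfO]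
end

section
/- Growth lemma for doubly indexed sequences (Lemma 7.1): Let α, β > 0 be real numbers and let c_{ℓ,m} be nonnegative real numbers defined for integers ℓ ≥ 0 and −1 ≤ m ≤ ℓ, satisfying: c_{0,0} = 1; c_{ℓ,ℓ} = 0 and c_{ℓ,−1} = c_{ℓ,0} for all ℓ > 0; and c_{ℓ,m} ≤ β · max{ c_{ℓ,m+1}, α(c_{ℓ−1,m−1} + c_{ℓ−1,m}) } for all ℓ > 0 and −1 < m < ℓ. Then limsup_{ℓ→∞} (c_{ℓ,0})^{1/ℓ} < ∞; in other words, there exists a real constant M such that c_{ℓ,0} ≤ M^ℓ for all sufficiently large ℓ. -/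
/-!
The recursion is monotone in its right-hand side, so any `f` satisfying the reverse inequality
and dominating `c` on the boundary (row `0`, the diagonal, the column `m = -1`) dominates `c`
everywhere: induct on the row, and inside a row downward from the diagonal. With `b = max β 1`,
`f ℓ m = C * b ^ (ℓ - m) * (2 * α * b) ^ ℓ` is such a majorant; its value at `m = 0` grows
geometrically in `ℓ`.
-/

section Comparison

variable {α β : ℝ} {c f : ℕ → ℤ → ℝ}

theorem row_le_of_row_le (hα : 0 ≤ α) (hβ : 0 ≤ β) (n : ℕ)
    (hc : ∀ m : ℤ, -1 < m → m < n + 1 →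
      c (n + 1) m ≤ β * max (c (n + 1) (m + 1)) (α * (c n (m - 1) + c n m)))
    (hf : ∀ m : ℤ, -1 < m → m < n + 1 →
      β * max (f (n + 1) (m + 1)) (α * (f n (m - 1) + f n m)) ≤ f (n + 1) m)
    (hdiag : c (n + 1) (n + 1) ≤ f (n + 1) (n + 1))
    (hc_neg : c (n + 1) (-1) = c (n + 1) 0) (hf_neg : f (n + 1) 0 ≤ f (n + 1) (-1))
    (hprev : ∀ m : ℤ, -1 ≤ m → m ≤ n → c n m ≤ f n m) :
    ∀ m : ℤ, -1 ≤ m → m ≤ n + 1 → c (n + 1) m ≤ f (n + 1) m := by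
  have hnonneg : ∀ m : ℤ, m ≤ n + 1 → 0 ≤ m → c (n + 1) m ≤ f (n + 1) m := by
    refine Int.leInductionDown (fun _ ↦ hdiag) fun m hm ih hm₀ ↦ ?_
    calc c (n + 1) (m - 1)
        ≤ β * max (c (n + 1) m) (α * (c n (m - 1 - 1) + c n (m - 1))) := by
          simpa using hc (m - 1) (by lia) (by lia)
      _ ≤ β * max (f (n + 1) m) (α * (f n (m - 1 - 1) + f n (m - 1))) := by
          gcongr
          exacts [ih (by lia), hprev _ (by lia) (by lia), hprev _ (by lia) (by lia)]
      _ ≤ f (n + 1) (m - 1) := by simpa using hf (m - 1) (by lia) (by lia)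
  intro m hm₁ hm₂
  rcases eq_or_lt_of_le hm₁ with rfl | hm₁
  · calc c (n + 1) (-1) = c (n + 1) 0 := hc_neg
      _ ≤ f (n + 1) 0 := hnonneg 0 (by lia) le_rfl
      _ ≤ f (n + 1) (-1) := hf_neg
  · exact hnonneg m hm₂ (by lia)

theorem le_of_recursion_le (hα : 0 ≤ α) (hβ : 0 ≤ β)
    (hc : ∀ (n : ℕ) (m : ℤ), -1 < m → m < n + 1 →
      c (n + 1) m ≤ β * max (c (n + 1) (m + 1)) (α * (c n (m - 1) + c n m)))
    (hf : ∀ (n : ℕ) (m : ℤ), -1 < m → m < n + 1 →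
      β * max (f (n + 1) (m + 1)) (α * (f n (m - 1) + f n m)) ≤ f (n + 1) m)
    (hrow₀ : ∀ m : ℤ, -1 ≤ m → m ≤ 0 → c 0 m ≤ f 0 m)
    (hdiag : ∀ n : ℕ, c (n + 1) (n + 1) ≤ f (n + 1) (n + 1))
    (hc_neg : ∀ n : ℕ, c (n + 1) (-1) = c (n + 1) 0)
    (hf_neg : ∀ n : ℕ, f (n + 1) 0 ≤ f (n + 1) (-1)) :
    ∀ (ℓ : ℕ) (m : ℤ), -1 ≤ m → m ≤ ℓ → c ℓ m ≤ f ℓ m := by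
  intro ℓ
  induction ℓ with
  | zero => simpa using hrow₀
  | succ n ih =>
    push_cast
    exact row_le_of_row_le hα hβ n (hc n) (hf n) (hdiag n) (hc_neg n) (hf_neg n) ih

end Comparison

section Majorant

variable {α β C b K : ℝ}

noncomputable def growthMajorant (C b K : ℝ) (ℓ : ℕ) (m : ℤ) : ℝ := C * b ^ ((ℓ : ℤ) - m) * K ^ ℓ

theorem growthMajorant_nonneg (hC : 0 ≤ C) (hb : 0 ≤ b) (hK : 0 ≤ K) (ℓ : ℕ) (m : ℤ) :
    0 ≤ growthMajorant C b K ℓ m := by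
  unfold growthMajorant
  positivity

theorem growthMajorant_sub_one (hb : 0 < b) (ℓ : ℕ) (m : ℤ) :
    growthMajorant C b K ℓ (m - 1) = b * growthMajorant C b K ℓ m := by
  simp only [growthMajorant, show (ℓ : ℤ) - (m - 1) = (ℓ : ℤ) - m + 1 by ring,
    zpow_add_one₀ hb.ne']
  ring

theorem growthMajorant_le_sub_one (hC : 0 ≤ C) (hb : 1 ≤ b) (hK : 0 ≤ K) (ℓ : ℕ) (m : ℤ) :
    growthMajorant C b K ℓ m ≤ growthMajorant C b K ℓ (m - 1) := by
  rw [growthMajorant_sub_one (by linarith)]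
  exact le_mul_of_one_le_left (growthMajorant_nonneg hC (by linarith) hK ℓ m) hb

theorem growthMajorant_succ (n : ℕ) (m : ℤ) :
    growthMajorant C b K (n + 1) (m + 1) = K * growthMajorant C b K n m := by
  simp only [growthMajorant, Nat.cast_add_one, add_sub_add_right_eq_sub, pow_succ]
  ring

theorem growthMajorant_recursion (hα : 0 ≤ α) (hβ : 0 ≤ β) (hC : 0 ≤ C) (hβb : β ≤ b)
    (hb : 1 ≤ b) (hK : 2 * α * b ≤ K) (n : ℕ) (m : ℤ) :
    β * max (growthMajorant C b K (n + 1) (m + 1))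
        (α * (growthMajorant C b K n (m - 1) + growthMajorant C b K n m))
      ≤ growthMajorant C b K (n + 1) m := by
  have hb₀ : 0 < b := by linarith
  have hK₀ : 0 ≤ K := le_trans (by positivity) hK
  have hleft : growthMajorant C b K (n + 1) m = b * (K * growthMajorant C b K n m) := by
    rw [← growthMajorant_succ, ← growthMajorant_sub_one hb₀, add_sub_cancel_right]
  have hg := growthMajorant_nonneg hC hb₀.le hK₀ n m
  rw [growthMajorant_succ, growthMajorant_sub_one hb₀, hleft, mul_max_of_nonneg _ _ hβ]
  set g := growthMajorant C b K n m
  refine max_le (by gcongr) ?_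
  calc β * (α * (b * g + g)) ≤ b * (α * (b * g + b * g)) := by gcongr; exact le_mul_of_one_le_left hg hb
    _ = b * ((2 * α * b) * g) := by ring
    _ ≤ b * (K * g) := by gcongr

end Majorant

theorem growth_lemma_doubly_indexed_general
    (α β : ℝ) (hα : 0 < α) (hβ : 0 < β)
    (c : ℕ → ℤ → ℝ)
    (h00 : c 0 0 = 1)
    (hdiag : ∀ ℓ : ℕ, 0 < ℓ → c ℓ (ℓ : ℤ) = 0)
    (hneg : ∀ ℓ : ℕ, 0 < ℓ → c ℓ (-1) = c ℓ 0)
    (hrec : ∀ (ℓ : ℕ), 0 < ℓ → ∀ m : ℤ, -1 < m → m < (ℓ : ℤ) →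
      c ℓ m ≤ β * max (c ℓ (m + 1)) (α * (c (ℓ - 1) (m - 1) + c (ℓ - 1) m))) :
    ∃ M : ℝ, ∀ᶠ ℓ : ℕ in Filter.atTop, c ℓ 0 ≤ M ^ ℓ := by
  obtain ⟨b, hb, hβb⟩ : ∃ b : ℝ, 1 ≤ b ∧ β ≤ b := ⟨max β 1, le_max_right _ _, le_max_left _ _⟩
  obtain ⟨C, hC, hcC⟩ : ∃ C : ℝ, 1 ≤ C ∧ c 0 (-1) ≤ C :=
    ⟨max (c 0 (-1)) 1, le_max_right _ _, le_max_left _ _⟩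
  obtain ⟨K, hK₀, hK⟩ : ∃ K : ℝ, 0 ≤ K ∧ 2 * α * b ≤ K := ⟨2 * α * b, by positivity, le_rfl⟩
  have hmajor := le_of_recursion_le (f := growthMajorant C b K) hα.le hβ.le
    (fun n m h₁ h₂ ↦ by simpa using hrec (n + 1) n.succ_pos m h₁ (by push_cast; exact h₂))
    (fun n m _ _ ↦ growthMajorant_recursion hα.le hβ.le (by linarith) hβb hb hK n m)
    (fun m h₁ h₂ ↦ by
      obtain rfl | rfl : m = -1 ∨ m = 0 := by lia
      · simpa [growthMajorant] using hcC.trans (le_mul_of_one_le_right (by linarith) hb)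
      · simpa [growthMajorant, h00] using hC)
    (fun n ↦ by
      rw [← Nat.cast_add_one, hdiag (n + 1) n.succ_pos]
      exact growthMajorant_nonneg (by linarith) (by linarith) hK₀ _ _)
    (fun n ↦ hneg (n + 1) n.succ_pos)
    (fun n ↦ by simpa using growthMajorant_le_sub_one (by linarith) hb hK₀ (n + 1) 0)
  refine ⟨C * b * K, Filter.eventually_ge_atTop 1 |>.mono fun ℓ hℓ ↦ ?_⟩
  calc c ℓ 0 ≤ C * (b ^ ℓ * K ^ ℓ) := by
        simpa [growthMajorant, mul_assoc] using hmajor ℓ 0 (by norm_num) (by positivity)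
    _ ≤ C ^ ℓ * (b ^ ℓ * K ^ ℓ) := by gcongr; exact le_self_pow₀ hC (by lia)
    _ = (C * b * K) ^ ℓ := by rw [mul_pow, mul_pow, mul_assoc]

/-- **Growth lemma for doubly indexed sequences** (Lemma 7.1).  Let `α, β > 0` and let
`c ℓ m` (defined for `ℓ ≥ 0` and `-1 ≤ m ≤ ℓ`) be nonnegative reals with `c 0 0 = 1`,
`c ℓ ℓ = 0` and `c ℓ (-1) = c ℓ 0` for `ℓ > 0`, satisfying the recursive bound
`c ℓ m ≤ β * max (c ℓ (m+1)) (α * (c (ℓ-1) (m-1) + c (ℓ-1) m))` for `-1 < m < ℓ`.  Then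
`limsup (c ℓ 0)^{1/ℓ} < ∞`; that is, there is a real `M` with `c ℓ 0 ≤ M ^ ℓ` for all
sufficiently large `ℓ`. -/
theorem growth_lemma_doubly_indexed
    (α β : ℝ) (hα : 0 < α) (hβ : 0 < β)
    (c : ℕ → ℤ → ℝ)
    (hnn : ∀ (ℓ : ℕ) (m : ℤ), -1 ≤ m → m ≤ (ℓ : ℤ) → 0 ≤ c ℓ m)
    (h00 : c 0 0 = 1)
    (hdiag : ∀ ℓ : ℕ, 0 < ℓ → c ℓ (ℓ : ℤ) = 0)
    (hneg : ∀ ℓ : ℕ, 0 < ℓ → c ℓ (-1) = c ℓ 0)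
    (hrec : ∀ (ℓ : ℕ), 0 < ℓ → ∀ m : ℤ, -1 < m → m < (ℓ : ℤ) →
      c ℓ m ≤ β * max (c ℓ (m + 1)) (α * (c (ℓ - 1) (m - 1) + c (ℓ - 1) m))) :
    ∃ M : ℝ, ∀ᶠ ℓ : ℕ in Filter.atTop, c ℓ 0 ≤ M ^ ℓ :=
  growth_lemma_doubly_indexed_general α β hα hβ c h00 hdiag hneg hrec
end

section
/- No nilpotents in the completed generic matrix algebra (key step of Proposition 3.1): Fix integers n, g ≥ 1 and let ĜM ⊆ M_n(ℂ[[ξ]]) be the completed generic matrix algebra. If f ∈ ĜM satisfies f^m = 0 for some m ≥ 1, then f = 0. -/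
/-!
Let `f_d` be the lowest nonzero homogeneous component of `f`. It lies in `GM`, and
`(f ^ m)_(m d) = f_d ^ m = 0`, so it suffices that `GM` is a domain. For a primitive `n`-th
root of unity `ζ`, let `P` be the cyclic shift and `Q = diagonal (ζ ^ j)`, so that `Q P = ζ P Q`.
Substituting `Ξ_k ↦ ∑_{a,b<n} ξ_{k,a,b} t^(a,b) P^a Q^b` maps `GM` into a quantum plane over
`ℂ[ξ][t₁, t₂]`, in which lexicographically leading coefficients multiply to a nonzero multiple
of some `P^a Q^b`; so the quantum plane is a domain. The substitution is injective: at `t = 1`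
it is the invertible linear change of variables given by a discrete Fourier transform.
-/
namespace NCGeneric

/-- The `g·n²` commuting indeterminates `ξ^k_{ij}`. -/
abbrev Vars (n g : ℕ) := Fin g × Fin n × Fin n

/-- The ring of formal power series `ℂ[[ξ]]`. -/
abbrev PS (n g : ℕ) := MvPowerSeries (Vars n g) ℂ

/-- The polynomial ring `ℂ[ξ]`. -/
abbrev Poly (n g : ℕ) := MvPolynomial (Vars n g) ℂ

/-- The generic matrices `Ξ_k = (ξ^k_{ij})_{ij}`. -/
noncomputable def Xi (n g : ℕ) (kk : Fin g) : Matrix (Fin n) (Fin n) (Poly n g) :=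
  fun i j => MvPolynomial.X (kk, i, j)

/-- The generic matrix algebra `GM`: the unital ℂ-subalgebra of `M_n(ℂ[ξ])` generated by
the generic matrices. -/
noncomputable def GM (n g : ℕ) : Subalgebra ℂ (Matrix (Fin n) (Fin n) (Poly n g)) :=
  Algebra.adjoin ℂ (Set.range (Xi n g))

/-- Total degree of a monomial exponent. -/
def degOf {n g : ℕ} (e : Vars n g →₀ ℕ) : ℕ := e.sum fun _ m => m

/-- The degree-`d` homogeneous component of a power series. -/
noncomputable def homComp {n g : ℕ} (d : ℕ) (f : PS n g) : PS n g :=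
  fun e => if degOf e = d then MvPowerSeries.coeff e f else 0

/-- The completed generic matrix algebra `ĜM ⊆ M_n(ℂ[[ξ]])`: all matrix power series each
of whose homogeneous components comes from the generic matrix algebra `GM`. -/
noncomputable def GMhat (n g : ℕ) : Set (Matrix (Fin n) (Fin n) (PS n g)) :=
  {f | ∀ d : ℕ, ∃ p ∈ GM n g,
    (p.map fun q => (q : PS n g)) = Matrix.of fun i j => homComp d (f i j)}

section HomogeneousComponents

open MvPowerSeries

variable {σ R : Type*} [Semiring R] {ι : Type*} [Fintype ι]

theorem le_order_matrix_mul {p q : ℕ} {x y : Matrix ι ι (MvPowerSeries σ R)}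
    (hx : ∀ i j, (p : ℕ∞) ≤ (x i j).order) (hy : ∀ i j, (q : ℕ∞) ≤ (y i j).order) (i j : ι) :
    ((p + q : ℕ) : ℕ∞) ≤ ((x * y) i j).order := by
  refine le_order fun d hd => ?_
  rw [Matrix.mul_apply, map_sum]
  refine Finset.sum_eq_zero fun k _ => coeff_of_lt_order ?_
  exact hd.trans_le (by push_cast; exact (add_le_add (hx i k) (hy k j)).trans le_order_mul)

theorem le_order_matrix_pow [DecidableEq ι] {p : ℕ} {x : Matrix ι ι (MvPowerSeries σ R)}
    (hx : ∀ i j, (p : ℕ∞) ≤ (x i j).order) (m : ℕ) (i j : ι) :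
    ((m * p : ℕ) : ℕ∞) ≤ ((x ^ m) i j).order := by
  induction m generalizing i j with
  | zero =>
    rw [zero_mul, pow_zero, Matrix.one_apply]
    split_ifs <;> simp
  | succ m ih =>
    rw [pow_succ, add_one_mul]
    exact le_order_matrix_mul ih hx i j

theorem homogeneousComponent_zero_one :
    homogeneousComponent 0 (1 : MvPowerSeries σ R) = 1 := by
  classical
  ext d
  by_cases hd : d = 0 <;> simp [coeff_homogeneousComponent, coeff_one, hd]

theorem map_homogeneousComponent_matrix_mul {p q : ℕ} {x y : Matrix ι ι (MvPowerSeries σ R)}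
    (hx : ∀ i j, (p : ℕ∞) ≤ (x i j).order) (hy : ∀ i j, (q : ℕ∞) ≤ (y i j).order) :
    (x * y).map (homogeneousComponent (p + q)) =
      x.map (homogeneousComponent p) * y.map (homogeneousComponent q) := by
  ext i j : 1
  simp only [Matrix.map_apply, Matrix.mul_apply, map_sum]
  exact Finset.sum_congr rfl fun k _ => homogeneousComponent_mul_of_le_order (hx i k) (hy k j)

theorem map_homogeneousComponent_matrix_pow [DecidableEq ι] {p : ℕ}
    {x : Matrix ι ι (MvPowerSeries σ R)} (hx : ∀ i j, (p : ℕ∞) ≤ (x i j).order) (m : ℕ) :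
    (x ^ m).map (homogeneousComponent (m * p)) = x.map (homogeneousComponent p) ^ m := by
  induction m with
  | zero =>
    ext i j : 1
    rw [zero_mul, pow_zero, pow_zero, Matrix.map_apply, Matrix.one_apply]
    split_ifs
    · exact homogeneousComponent_zero_one
    · exact map_zero _
  | succ m ih =>
    rw [pow_succ, add_one_mul, map_homogeneousComponent_matrix_mul (le_order_matrix_pow hx m) hx,
      ih, pow_succ]

end HomogeneousComponents

section LowestComponent

open MvPowerSeries

variable {σ R : Type*} [Semiring R] {ι : Type*}

theorem exists_le_order_and_map_homogeneousComponent_ne_zero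
    {x : Matrix ι ι (MvPowerSeries σ R)} (hx : x ≠ 0) :
    ∃ d : ℕ, (∀ i j, (d : ℕ∞) ≤ (x i j).order) ∧ x.map (homogeneousComponent d) ≠ 0 := by
  classical
  have hex : ∃ d : ℕ, x.map (homogeneousComponent d) ≠ 0 := by
    obtain ⟨i, j, hij⟩ : ∃ i j, x i j ≠ 0 := by
      by_contra! h
      exact hx (Matrix.ext h)
    refine ⟨(x i j).order.toNat, fun h => homogeneousComponent_of_order ?_ (congr_fun₂ h i j)⟩
    exact ne_zero_iff_order_finite.1 hij
  refine ⟨Nat.find hex, fun i j => le_order fun e he => ?_, Nat.find_spec hex⟩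
  have hlow : x.map (homogeneousComponent e.degree) = 0 := by
    by_contra h
    exact Nat.find_min hex (by exact_mod_cast he) h
  simpa [coeff_homogeneousComponent] using congr_arg (coeff e) (congr_fun₂ hlow i j)

end LowestComponent

theorem pow_eq_pow_of_natCast_eq {M : Type*} [Monoid M] {ζ : M} {n : ℕ} (hζ : ζ ^ n = 1)
    {a b : ℕ} (h : (a : ZMod n) = b) : ζ ^ a = ζ ^ b := by
  rw [pow_eq_pow_mod a hζ, pow_eq_pow_mod b hζ, (ZMod.natCast_eq_natCast_iff' a b n).1 h]

section ClockShift

open Fin.NatCast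

variable {A : Type*} [CommRing A] {n : ℕ} [NeZero n]

/-- The product `P ^ γ.1 * Q ^ γ.2` of a power of the cyclic shift `P` and a power of the clock
matrix `Q = diagonal (ζ ^ j)`. -/
def clockShift (ζ : A) (γ : ℕ × ℕ) : Matrix (Fin n) (Fin n) A :=
  Matrix.of fun i j => if i = j + (γ.1 : Fin n) then ζ ^ ((j : ℕ) * γ.2) else 0

theorem clockShift_zero (ζ : A) : clockShift ζ (0 : ℕ × ℕ) = (1 : Matrix (Fin n) (Fin n) A) := by
  ext i j
  simp [clockShift, Matrix.one_apply]

theorem clockShift_mul {ζ : A} (hζ : ζ ^ n = 1) (γ δ : ℕ × ℕ) :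
    clockShift ζ γ * clockShift ζ δ = ζ ^ (δ.1 * γ.2) • clockShift (n := n) ζ (γ + δ) := by
  ext i j
  simp only [clockShift, Matrix.mul_apply, Matrix.of_apply, Matrix.smul_apply, mul_ite, ite_mul,
    mul_zero, zero_mul, Finset.sum_ite_eq', Finset.mem_univ, if_true, Prod.fst_add, Prod.snd_add,
    smul_eq_mul]
  have hidx : j + (δ.1 : Fin n) + (γ.1 : Fin n) = j + ((γ.1 + δ.1 : ℕ) : Fin n) := by
    push_cast; abel
  rw [hidx]
  split_ifs
  · rw [← pow_add, ← pow_add]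
    apply pow_eq_pow_of_natCast_eq hζ
    simp only [Fin.val_add, Fin.val_natCast, Nat.cast_add, Nat.cast_mul, ZMod.natCast_mod]
    ring
  · rfl

theorem eq_zero_of_smul_clockShift_eq_zero {ζ : A} {γ : ℕ × ℕ} {c : A}
    (h : c • clockShift (n := n) ζ γ = 0) : c = 0 := by
  simpa [clockShift] using congr_fun₂ h (γ.1 : Fin n) 0

end ClockShift

attribute [local instance] Finset.HasAntidiagonal.antidiagonalOfLocallyFinite

section LeadingCoefficient

open AddMonoidAlgebra

variable {ι R : Type*} [Fintype ι] [Semiring R]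

def coeffMatrix (x : Matrix ι ι (AddMonoidAlgebra R (ℕ × ℕ))) (γ : ℕ × ℕ) : Matrix ι ι R :=
  x.map fun p => p.coeff γ

theorem coeffMatrix_mul (x y : Matrix ι ι (AddMonoidAlgebra R (ℕ × ℕ))) (γ : ℕ × ℕ) :
    coeffMatrix (x * y) γ =
      ∑ p ∈ Finset.HasAntidiagonal.antidiagonal γ, coeffMatrix x p.1 * coeffMatrix y p.2 := by
  ext i j
  simp only [coeffMatrix, Matrix.map_apply, Matrix.mul_apply, Matrix.sum_apply, coeff_sum,
    Finsupp.finsetSum_apply]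
  rw [Finset.sum_comm]
  exact Finset.sum_congr rfl fun k _ =>
    coeff_mul_antidiag _ _ _ _ Finset.HasAntidiagonal.mem_antidiagonal

theorem exists_coeffMatrix_ne_zero_and_supDegree_le {x : Matrix ι ι (AddMonoidAlgebra R (ℕ × ℕ))}
    (hx : x ≠ 0) :
    ∃ γ, coeffMatrix x γ ≠ 0 ∧ ∀ i j, (x i j).supDegree toLex ≤ toLex γ := by
  set S := Finset.univ.biUnion fun p : ι × ι => (x p.1 p.2).coeff.support
  have hS : S.Nonempty := by
    obtain ⟨i, j, hij⟩ : ∃ i j, x i j ≠ 0 := by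
      by_contra! h
      exact hx (Matrix.ext h)
    obtain ⟨γ, hγ⟩ := Finsupp.support_nonempty_iff.2 (mt coeff_eq_zero.1 hij)
    exact ⟨γ, Finset.mem_biUnion.2 ⟨(i, j), Finset.mem_univ _, hγ⟩⟩
  obtain ⟨γ, hγS, hγmax⟩ := S.exists_max_image toLex hS
  obtain ⟨⟨i, j⟩, -, hγ⟩ := Finset.mem_biUnion.1 hγS
  refine ⟨γ, fun h => Finsupp.mem_support_iff.1 hγ (congr_fun₂ h i j), fun i j => ?_⟩
  exact Finset.sup_le fun δ hδ => hγmax δ (Finset.mem_biUnion.2 ⟨(i, j), Finset.mem_univ _, hδ⟩)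

theorem coeffMatrix_mul_add_of_supDegree_le {x y : Matrix ι ι (AddMonoidAlgebra R (ℕ × ℕ))}
    {γ δ : ℕ × ℕ} (hx : ∀ i j, (x i j).supDegree toLex ≤ toLex γ)
    (hy : ∀ i j, (y i j).supDegree toLex ≤ toLex δ) :
    coeffMatrix (x * y) (γ + δ) = coeffMatrix x γ * coeffMatrix y δ := by
  ext i j
  simp only [coeffMatrix, Matrix.map_apply, Matrix.mul_apply, coeff_sum, Finsupp.finsetSum_apply]
  exact Finset.sum_congr rfl fun k _ =>
    coeff_add_of_supDegree_le (fun _ _ => toLex_add _ _) toLex.injective (hx i k) (hy k j)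

end LeadingCoefficient

section QuantumPlane

open AddMonoidAlgebra Finset.HasAntidiagonal

variable {A : Type*} [CommRing A] {n : ℕ} [NeZero n]

/-- The quantum plane `A⟨u, v⟩ / (v * u = ζ • u * v)`, realised in `Mₙ(A[ℕ × ℕ])` by
`u ↦ t^(1,0) • P` and `v ↦ t^(0,1) • Q`. -/
def quantumPlane (ζ : A) (hζ : ζ ^ n = 1) :
    Subalgebra A (Matrix (Fin n) (Fin n) (AddMonoidAlgebra A (ℕ × ℕ))) where
  carrier := {x | ∀ γ, ∃ c : A, coeffMatrix x γ = c • clockShift ζ γ}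
  mul_mem' {x y} hx hy γ := by
    choose cx hcx using hx
    choose cy hcy using hy
    refine ⟨∑ p ∈ antidiagonal γ, cx p.1 * cy p.2 * ζ ^ (p.2.1 * p.1.2), ?_⟩
    rw [coeffMatrix_mul, Finset.sum_smul]
    refine Finset.sum_congr rfl fun p hp => ?_
    rw [hcx, hcy, Matrix.smul_mul, Matrix.mul_smul, clockShift_mul hζ, mem_antidiagonal.1 hp,
      smul_smul, smul_smul, mul_assoc]
  add_mem' {x y} hx hy γ := by
    obtain ⟨c, hc⟩ := hx γ
    obtain ⟨d, hd⟩ := hy γ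
    exact ⟨c + d, by rw [add_smul, ← hc, ← hd]; rfl⟩
  algebraMap_mem' c γ := by
    refine ⟨if γ = 0 then c else 0, ?_⟩
    ext i j
    by_cases hγ : γ = 0
    · subst hγ
      by_cases hij : i = j <;>
        simp [coeffMatrix, clockShift_zero, Matrix.algebraMap_matrix_apply, hij, coe_algebraMap]
    · simp only [coeffMatrix, Matrix.map_apply, Matrix.algebraMap_matrix_apply, if_neg hγ,
        zero_smul, Matrix.zero_apply]
      split_ifs <;> simp [coe_algebraMap, coeff_single, Ne.symm hγ]

instance [IsDomain A] {ζ : A} (hζ : ζ ^ n = 1) : NoZeroDivisors (quantumPlane ζ hζ) := by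
  refine ⟨fun {x y} hxy => ?_⟩
  by_contra! h
  obtain ⟨γ, hγ, hxγ⟩ := exists_coeffMatrix_ne_zero_and_supDegree_le
    fun h' => h.1 (Subtype.ext h')
  obtain ⟨δ, hδ, hyδ⟩ := exists_coeffMatrix_ne_zero_and_supDegree_le
    fun h' => h.2 (Subtype.ext h')
  obtain ⟨c, hc⟩ := x.2 γ
  obtain ⟨d, hd⟩ := y.2 δ
  have hc0 : c ≠ 0 := by rintro rfl; exact hγ (by rw [hc, zero_smul])
  have hd0 : d ≠ 0 := by rintro rfl; exact hδ (by rw [hd, zero_smul])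
  have hζ0 : ζ ≠ 0 := by rintro rfl; simp [NeZero.ne n] at hζ
  have hlead : coeffMatrix (x * y).val (γ + δ) =
      (c * d * ζ ^ (δ.1 * γ.2)) • clockShift ζ (γ + δ) := by
    rw [MulMemClass.coe_mul, coeffMatrix_mul_add_of_supDegree_le hxγ hyδ, hc, hd, Matrix.smul_mul,
      Matrix.mul_smul, clockShift_mul hζ, smul_smul, smul_smul, mul_assoc]
  rw [hxy] at hlead
  exact mul_ne_zero (mul_ne_zero hc0 hd0) (pow_ne_zero _ hζ0)
    (eq_zero_of_smul_clockShift_eq_zero hlead.symm)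

end QuantumPlane

theorem IsPrimitiveRoot.sum_pow_mul_inv_pow {n : ℕ} {ω : ℂ} (hω : IsPrimitiveRoot ω n)
    (j j' : Fin n) :
    ∑ b : Fin n, ω ^ ((j : ℕ) * b) * ω⁻¹ ^ ((j' : ℕ) * b) = if j = j' then (n : ℂ) else 0 := by
  have hω0 : ω ≠ 0 := hω.ne_zero (Fin.pos j).ne'
  set z := ω ^ (j : ℕ) * ω⁻¹ ^ (j' : ℕ) with hz_def
  have hz : ∀ b : ℕ, ω ^ ((j : ℕ) * b) * ω⁻¹ ^ ((j' : ℕ) * b) = z ^ b := fun b => by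
    rw [mul_pow, pow_mul, pow_mul]
  simp only [hz, Fin.sum_univ_eq_sum_range (z ^ ·)]
  split_ifs with hjj
  · subst hjj
    simp [z, inv_pow, hω0]
  · have hz1 : z ≠ 1 := fun h => hjj <| Fin.ext <| hω.pow_inj j.isLt j'.isLt <| by
      rwa [show z = ω ^ (j : ℕ) * (ω ^ (j' : ℕ))⁻¹ by rw [hz_def, inv_pow],
        mul_inv_eq_one₀ (pow_ne_zero _ hω0)] at h
    rw [geom_sum_eq hz1, mul_pow, ← pow_mul, ← pow_mul, mul_comm _ n, mul_comm (j' : ℕ) n,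
      pow_mul, pow_mul, hω.pow_eq_one, inv_pow, hω.pow_eq_one]
    simp

section GenericQuantumPlane

open Fin.NatCast MvPolynomial AddMonoidAlgebra

variable {n g : ℕ} [NeZero n]

theorem map_single_smul_clockShift_mem_quantumPlane {A : Type*} [CommRing A] {ζ : A}
    (hζ : ζ ^ n = 1) (γ : ℕ × ℕ) (c : A) :
    (c • clockShift ζ γ).map (single γ) ∈ quantumPlane ζ hζ := by
  intro δ
  refine ⟨if γ = δ then c else 0, ?_⟩
  ext i j
  by_cases h : γ = δ <;> simp [coeffMatrix, coeff_single, h]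

/-- The generic element `∑_{a,b < n} ξ_{k,a,b} t^(a,b) P^a Q^b` of the quantum plane. -/
noncomputable def genericElement (ω : ℂ) (k : Fin g) :
    Matrix (Fin n) (Fin n) (AddMonoidAlgebra (Poly n g) (ℕ × ℕ)) :=
  ∑ ab : Fin n × Fin n,
    ((X (k, ab.1, ab.2) : Poly n g) • clockShift (C ω) ((ab.1 : ℕ), (ab.2 : ℕ))).map
    (single ((ab.1 : ℕ), (ab.2 : ℕ)))

noncomputable def genericSubst (ω : ℂ) : Poly n g →ₐ[ℂ] AddMonoidAlgebra (Poly n g) (ℕ × ℕ) :=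
  aeval fun v => genericElement ω v.1 v.2.1 v.2.2

theorem genericSubst_mapMatrix_Xi (ω : ℂ) (k : Fin g) :
    (genericSubst ω).mapMatrix (Xi n g k) = genericElement ω k := by
  ext i j : 1
  simp [genericSubst, Xi]

theorem GM_le_comap_quantumPlane {ω : ℂ} (hζ : (C ω : Poly n g) ^ n = 1) :
    GM n g ≤ ((quantumPlane (C ω) hζ).restrictScalars ℂ).comap
      (genericSubst ω).mapMatrix := by
  refine Algebra.adjoin_le (Set.range_subset_iff.2 fun k => ?_)
  rw [SetLike.mem_coe, Subalgebra.mem_comap, genericSubst_mapMatrix_Xi,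
    Subalgebra.mem_restrictScalars]
  exact sum_mem fun ab _ => map_single_smul_clockShift_mem_quantumPlane hζ _ _

end GenericQuantumPlane

section Injectivity

open Fin.NatCast MvPolynomial AddMonoidAlgebra

variable {n g : ℕ} [NeZero n]

theorem lift_one_genericElement (ω : ℂ) (k : Fin g) (i j : Fin n) :
    lift (Poly n g) (Poly n g) (ℕ × ℕ) 1 (genericElement ω k i j) =
      ∑ b : Fin n, C (ω ^ ((j : ℕ) * b)) * X (k, i - j, b) := by
  simp only [genericElement, Matrix.sum_apply, Matrix.map_apply, Matrix.smul_apply, map_sum,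
    lift_single, MonoidHom.one_apply, smul_eq_mul, mul_one, clockShift, Matrix.of_apply,
    Fin.cast_val_eq_self, Fintype.sum_prod_type, mul_ite, mul_zero, ← map_pow]
  rw [Finset.sum_comm]
  refine Finset.sum_congr rfl fun b _ => ?_
  simp_rw [← sub_eq_iff_eq_add', Fintype.sum_ite_eq, mul_comm]

/-- The inverse discrete Fourier transform in the last index of the variables. -/
noncomputable def dftSubst (ω : ℂ) : Poly n g →ₐ[ℂ] Poly n g :=
  aeval fun v => ∑ j : Fin n, C ((n : ℂ)⁻¹ * ω⁻¹ ^ ((j : ℕ) * v.2.2)) * X (v.1, j + v.2.1, j)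

theorem dftSubst_sum {ω : ℂ} (hω : IsPrimitiveRoot ω n) (k : Fin g) (i j : Fin n) :
    dftSubst ω (∑ b : Fin n, C (ω ^ ((j : ℕ) * b)) * X (k, i - j, b)) = X (k, i, j) := by
  calc dftSubst ω (∑ b : Fin n, C (ω ^ ((j : ℕ) * b)) * X (k, i - j, b))
      = ∑ j' : Fin n, C ((n : ℂ)⁻¹ * ∑ b : Fin n, ω ^ ((j : ℕ) * b) * ω⁻¹ ^ ((j' : ℕ) * b)) *
          X (k, j' + (i - j), j') := by
        simp only [dftSubst, map_sum, map_mul, aeval_C, aeval_X, algebraMap_eq, Finset.mul_sum]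
        rw [Finset.sum_comm]
        refine Finset.sum_congr rfl fun j' _ => ?_
        rw [Finset.sum_mul]
        exact Finset.sum_congr rfl fun b _ => by ring
    _ = X (k, j + (i - j), j) := by
        simp_rw [IsPrimitiveRoot.sum_pow_mul_inv_pow hω]
        simp
    _ = X (k, i, j) := by rw [add_sub_cancel]

theorem genericSubst_injective {ω : ℂ} (hω : IsPrimitiveRoot ω n) :
    Function.Injective (genericSubst (n := n) (g := g) ω) := by
  -- `ε` evaluates at `t = 1`.
  set ε := (lift (Poly n g) (Poly n g) (ℕ × ℕ) 1).restrictScalars ℂ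
  have hinv : ((dftSubst ω).comp ε).comp (genericSubst ω) = AlgHom.id ℂ (Poly n g) := by
    refine MvPolynomial.algHom_ext fun ⟨k, i, j⟩ => ?_
    simp only [AlgHom.comp_apply, genericSubst, aeval_X, ε, AlgHom.restrictScalars_apply,
      lift_one_genericElement, dftSubst_sum hω, AlgHom.id_apply]
  exact Function.LeftInverse.injective (g := (dftSubst ω).comp ε) (DFunLike.congr_fun hinv)

end Injectivity

instance (n g : ℕ) : NoZeroDivisors (GM n g) := by
  rcases eq_zero_or_neZero n with rfl | _
  · exact ⟨fun {_ _} _ => Or.inl (Subsingleton.elim _ _)⟩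
  obtain ⟨ω, hω⟩ : ∃ ω : ℂ, IsPrimitiveRoot ω n :=
    ⟨_, Complex.isPrimitiveRoot_exp n (NeZero.ne n)⟩
  have hζ : (MvPolynomial.C ω : Poly n g) ^ n = 1 := by rw [← map_pow, hω.pow_eq_one, map_one]
  let φ := ((genericSubst ω).mapMatrix.comp (GM n g).val).codRestrict
    ((quantumPlane (MvPolynomial.C ω) hζ).restrictScalars ℂ)
    fun p => GM_le_comap_quantumPlane hζ p.2
  have : NoZeroDivisors ((quantumPlane (MvPolynomial.C ω) hζ).restrictScalars ℂ) :=
    inferInstanceAs (NoZeroDivisors (quantumPlane (MvPolynomial.C ω) hζ))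
  exact Function.Injective.noZeroDivisors φ
    (fun p q h => Subtype.ext (Matrix.map_injective (genericSubst_injective hω) congr(($h).val)))
    (map_zero φ) (map_mul φ)

theorem homComp_eq_homogeneousComponent {n g : ℕ} (d : ℕ) (φ : PS n g) :
    homComp d φ = MvPowerSeries.homogeneousComponent d φ := by
  ext e
  rw [MvPowerSeries.coeff_homogeneousComponent]
  rfl

theorem exists_mem_GM_map_eq_map_homogeneousComponent {n g : ℕ}
    {f : Matrix (Fin n) (Fin n) (PS n g)} (hf : f ∈ GMhat n g) (d : ℕ) :
    ∃ p ∈ GM n g, p.map MvPolynomial.coeToMvPowerSeries.ringHom =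
      f.map (MvPowerSeries.homogeneousComponent d) := by
  obtain ⟨p, hp, hpf⟩ := hf d
  simp only [homComp_eq_homogeneousComponent] at hpf
  exact ⟨p, hp, hpf⟩

theorem completed_generic_matrix_algebra_no_nilpotents_general
    {n g : ℕ}
    (f : Matrix (Fin n) (Fin n) (PS n g)) (hf : f ∈ GMhat n g)
    (m : ℕ) (hnil : f ^ m = 0) :
    f = 0 := by
  by_contra hf0
  obtain ⟨d, hord, hd⟩ := exists_le_order_and_map_homogeneousComponent_ne_zero hf0
  obtain ⟨p, hpGM, hp⟩ := exists_mem_GM_map_eq_map_homogeneousComponent hf d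
  have hpm : (p ^ m).map MvPolynomial.coeToMvPowerSeries.ringHom = 0 := by
    rw [Matrix.map_pow, hp, ← map_homogeneousComponent_matrix_pow hord, hnil,
      Matrix.map_zero _ (map_zero _)]
  replace hpm : p ^ m = 0 := Matrix.map_injective (MvPolynomial.coe_injective _ ℂ)
    (hpm.trans (Matrix.map_zero _ MvPolynomial.coe_zero).symm)
  obtain rfl : p = 0 := congr_arg Subtype.val
    (eq_zero_of_pow_eq_zero (x := (⟨p, hpGM⟩ : GM n g)) (Subtype.ext hpm))
  exact hd (by rw [← hp, Matrix.map_zero _ (map_zero _)])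

/-- **No nilpotents in the completed generic matrix algebra** (key step of
Proposition 3.1).  If `f ∈ ĜM` satisfies `f^m = 0` for some `m ≥ 1`, then `f = 0`. -/
theorem completed_generic_matrix_algebra_no_nilpotents
    {n g : ℕ} (hn : 1 ≤ n) (hg : 1 ≤ g)
    (f : Matrix (Fin n) (Fin n) (PS n g)) (hf : f ∈ GMhat n g)
    (m : ℕ) (hm : 1 ≤ m) (hnil : f ^ m = 0) :
    f = 0 :=
  completed_generic_matrix_algebra_no_nilpotents_general f hf m hnil

end NCGeneric
end

section
/- Rank bound for evaluations of the skew-symmetric linear matrix on commuting tuples (claim proved in the Remark after Theorem 5.5): Let n ≥ 1 and let T_1, T_2, T_3 ∈ M_n(ℂ) be pairwise commuting matrices. Let A(T) ∈ M_{3n}(ℂ) be the 3×3 block matrix with block rows (0, T_3, −T_2), (−T_3, 0, T_1), (T_2, −T_1, 0). Then rank A(T) ≤ (54/19)·n, i.e., 19·rank A(T) ≤ 54·n. -/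
/-!
Writing `B` for the `3n × n` matrix obtained by stacking `T₁, T₂, T₃`, commutativity gives
`A(T) * B = 0`, so `rank A(T) + rank B ≤ 3n`. Each block column of `A(T)` is built from the
blocks `0, ±Tₖ`, hence vanishes on `ker B` and has rank at most `rank B`; thus
`rank A(T) ≤ 3 rank B`. Together, `4 rank A(T) ≤ 9n`, which is stronger than `19 rank A(T) ≤ 54n`.
-/

namespace Matrix

section Rank

variable {K : Type*} [Field K] {l m n : Type*} [Fintype n]

theorem rank_add_le (A B : Matrix m n K) : (A + B).rank ≤ A.rank + B.rank := by
  rw [rank, rank, rank, mulVecLin_add]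
  refine (Submodule.finrank_mono ?_).trans (Submodule.finrank_add_le_finrank_add_finrank _ _)
  rintro _ ⟨v, rfl⟩
  exact Submodule.add_mem_sup ⟨v, rfl⟩ ⟨v, rfl⟩

theorem rank_sum_le {η : Type*} (s : Finset η) (A : η → Matrix m n K) :
    (∑ i ∈ s, A i).rank ≤ ∑ i ∈ s, (A i).rank :=
  Finset.le_sum_of_subadditive (fun A : Matrix m n K => A.rank) (rank_zero (n := n)).le
    rank_add_le s A

theorem rank_le_rank_of_ker_le {B : Matrix m n K} {C : Matrix l n K}
    (h : LinearMap.ker B.mulVecLin ≤ LinearMap.ker C.mulVecLin) : C.rank ≤ B.rank := by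
  have hB := LinearMap.finrank_range_add_finrank_ker B.mulVecLin
  have hC := LinearMap.finrank_range_add_finrank_ker C.mulVecLin
  have hker := Submodule.finrank_mono h
  rw [rank, rank]
  omega

theorem rank_le_sum_rank_submatrix_prodMk {ι : Type*} [Fintype ι] [DecidableEq ι]
    [DecidableEq n] (M : Matrix m (ι × n) K) :
    M.rank ≤ ∑ j, (M.submatrix id (Prod.mk j)).rank := by
  let P (j : ι) : Matrix n (ι × n) K := (1 : Matrix (ι × n) (ι × n) K).submatrix (Prod.mk j) id
  have hM : M = ∑ j, M.submatrix id (Prod.mk j) * P j := by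
    ext p ⟨i, b⟩
    simp [P, sum_apply, mul_apply, one_apply, ite_and, Finset.sum_ite_eq']
  calc M.rank = (∑ j, M.submatrix id (Prod.mk j) * P j).rank := by rw [← hM]
    _ ≤ ∑ j, (M.submatrix id (Prod.mk j) * P j).rank := rank_sum_le _ _
    _ ≤ ∑ j, (M.submatrix id (Prod.mk j)).rank :=
      Finset.sum_le_sum fun j _ => rank_mul_le_left _ _

end Rank

section Stack

variable {R : Type*} {η I J K L m n : Type*}

def vstack (T : η → Matrix m n R) : Matrix (η × m) n R :=
  of fun p b => T p.1 p.2 b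

theorem comp_mul_vstack [NonUnitalNonAssocSemiring R] [Fintype J] [Fintype L]
    (M : Matrix I J (Matrix K L R)) (T : J → Matrix L n R) :
    comp I J K L R M * vstack T = vstack fun i => ∑ j, M i j * T j := by
  ext ⟨i, k⟩ b
  simp [vstack, mul_apply, Fintype.sum_prod_type, sum_apply]

theorem comp_submatrix_prodMk (M : Matrix I J (Matrix K L R)) (j : J) :
    (comp I J K L R M).submatrix id (Prod.mk j) = vstack fun i => M i j :=
  rfl

theorem ker_mulVecLin_vstack [CommSemiring R] [Fintype n] (T : η → Matrix m n R) :
    LinearMap.ker (vstack T).mulVecLin = ⨅ i, LinearMap.ker (T i).mulVecLin := by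
  ext v
  simp only [LinearMap.mem_ker, Submodule.mem_iInf, mulVecLin_apply, funext_iff, Prod.forall]
  rfl

end Stack

end Matrix

open Matrix

section CrossMatrix

variable {ι : Type*}

-- The matrix `A(T)` of the statement, the block form of `v ↦ v × T`.
def crossMatrix {R : Type*} [Ring R] (T : Fin 3 → Matrix ι ι R) :
    Matrix (Fin 3 × ι) (Fin 3 × ι) R :=
  comp _ _ _ _ _ !![0, T 2, -T 1; -T 2, 0, T 0; T 1, -T 0, 0]

theorem crossMatrix_mul_vstack {R : Type*} [Ring R] [Fintype ι] {T : Fin 3 → Matrix ι ι R}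
    (hT : ∀ i j, T i * T j = T j * T i) : crossMatrix T * vstack T = 0 := by
  rw [crossMatrix, comp_mul_vstack]
  ext ⟨i, a⟩ b
  fin_cases i <;> simp [vstack, Fin.sum_univ_three, hT 2 1, hT 2 0, hT 1 0]

theorem ker_vstack_le_ker_crossMatrix_submatrix {R : Type*} [CommRing R] [Fintype ι]
    (T : Fin 3 → Matrix ι ι R) (j : Fin 3) :
    LinearMap.ker (vstack T).mulVecLin ≤
      LinearMap.ker ((crossMatrix T).submatrix id (Prod.mk j)).mulVecLin := by
  rw [crossMatrix, comp_submatrix_prodMk, ker_mulVecLin_vstack, ker_mulVecLin_vstack]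
  refine le_iInf fun i => ?_
  fin_cases i <;> fin_cases j <;> simp [iInf_le]

theorem rank_crossMatrix_le {K : Type*} [Field K] [Fintype ι] [DecidableEq ι]
    (T : Fin 3 → Matrix ι ι K) : (crossMatrix T).rank ≤ 3 * (vstack T).rank :=
  calc (crossMatrix T).rank ≤ ∑ j, ((crossMatrix T).submatrix id (Prod.mk j)).rank :=
        rank_le_sum_rank_submatrix_prodMk _
    _ ≤ ∑ _j : Fin 3, (vstack T).rank :=
        Finset.sum_le_sum fun j _ =>
          rank_le_rank_of_ker_le (ker_vstack_le_ker_crossMatrix_submatrix T j)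
    _ = 3 * (vstack T).rank := by simp

end CrossMatrix

/-- **Rank bound for evaluations of the skew-symmetric linear matrix on commuting tuples**
(claim proved in the Remark after Theorem 5.5).  If `T₁, T₂, T₃ ∈ M_n(ℂ)` pairwise commute
and `A(T)` is the `3n × 3n` block matrix with block rows `(0, T₃, −T₂)`, `(−T₃, 0, T₁)`,
`(T₂, −T₁, 0)`, then `rank A(T) ≤ (54/19)·n`. -/
theorem skew_matrix_rank_bound_on_commuting_tuples
    {n : ℕ} (T : Fin 3 → Matrix (Fin n) (Fin n) ℂ)
    (hcomm : ∀ i j, T i * T j = T j * T i) :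
    19 * Matrix.rank (Matrix.of (fun (p q : Fin 3 × Fin n) =>
        (![![0, T 2, -T 1], ![-T 2, 0, T 0], ![T 1, -T 0, 0]] p.1 q.1) p.2 q.2))
      ≤ 54 * n := by
  change 19 * (crossMatrix T).rank ≤ 54 * n
  have hcols := rank_crossMatrix_le T
  have hnull := rank_add_rank_le_card_of_mul_eq_zero (crossMatrix_mul_vstack hcomm)
  rw [Fintype.card_prod, Fintype.card_fin, Fintype.card_fin] at hnull
  omega
end
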